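/- arXiv:1810.07819 — 4 statements merged into one kernel-verified Lean document; each statement's English description precedes it below -/
import Mathlib

section
/- The operator Wiener class 𝒜(ℓ²(H)) = {A = (T_{kj}) : Σ_{l∈ℤ} sup_k ‖T_{k,k+l}‖ < ∞} is strictly contained in 𝒞(ℓ²(H)), the closure in B(ℓ²(H)) of matrices with finitely many nonzero diagonals and uniformly bounded entries. In particular, for f ∈ C(𝕋) \ A(𝕋) (continuous but with non-absolutely-convergent Fourier series), the Toeplitz matrix M_f = (f̂(j−k)·Id) belongs to 𝒞(ℓ²(H)) but not to 𝒜(ℓ²(H)). -/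
noncomputable section

/-- The Hilbert space `ℓ²(H)` of square-summable `H`-valued sequences. -/
abbrev ellTwo (H : Type) [NormedAddCommGroup H] [InnerProductSpace ℂ H] : Type :=
  lp (fun _ : ℕ => H) 2

variable {H : Type} [NormedAddCommGroup H] [InnerProductSpace ℂ H] [CompleteSpace H]
  [TopologicalSpace.SeparableSpace H]

/-- A bounded operator `A` on `ℓ²(H)` is represented by the matrix `T = (T_{kj})`
(with `T k j ∈ B(H)`) if `(A (x e_j))_k = T_{kj} x` for all `j, k, x`. -/
def Represents (T : ℕ → ℕ → (H →L[ℂ] H))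
    (A : ellTwo H →L[ℂ] ellTwo H) : Prop :=
  ∀ (j : ℕ) (x : H) (k : ℕ), A (lp.single 2 j x) k = T k j x

/-- A "polynomial" matrix: finitely many nonzero diagonals and uniformly bounded entries. -/
def PolyMat (T : ℕ → ℕ → (H →L[ℂ] H)) : Prop :=
  (∃ N : ℕ, ∀ k j : ℕ, (N : ℤ) < |(j : ℤ) - (k : ℤ)| → T k j = 0) ∧
  (∃ M : ℝ, ∀ k j : ℕ, ‖T k j‖ ≤ M)

/-- The class `𝒞(ℓ²(H))`: the closure in `B(ℓ²(H))` of the operators represented by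
polynomial matrices. -/
def ContinuousClass (A : ellTwo H →L[ℂ] ellTwo H) : Prop :=
  A ∈ closure {B : ellTwo H →L[ℂ] ellTwo H | ∃ T, PolyMat T ∧ Represents T B}

/-- The operator Wiener class condition `Σ_{l∈ℤ} sup_k ‖T_{k,k+l}‖ < ∞` for a matrix. -/
def WienerMat (T : ℕ → ℕ → (H →L[ℂ] H)) : Prop :=
  (∀ l : ℤ, BddAbove {r : ℝ | ∃ k j : ℕ, (j : ℤ) = (k : ℤ) + l ∧ r = ‖T k j‖}) ∧
  Summable fun l : ℤ =>
    sSup {r : ℝ | ∃ k j : ℕ, (j : ℤ) = (k : ℤ) + l ∧ r = ‖T k j‖}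

/-- The `l`-th Fourier coefficient of a `2π`-periodic function `f : ℝ → ℂ`. -/
def scalarFourierCoeff (f : ℝ → ℂ) (l : ℤ) : ℂ :=
  (1 / (2 * Real.pi) : ℂ) *
    ∫ t in (0 : ℝ)..(2 * Real.pi), f t * Complex.exp (-Complex.I * l * t)

/-!
A Wiener-class matrix is the absolutely convergent sum of its diagonals, the `l`-th one being a
bounded diagonal operator composed with the shift by `l`, and the finite partial sums have
finitely many diagonals.

For continuous `f`, approximate `f` uniformly by trigonometric polynomials `p`. The Toeplitz
operator of `p` is a finite combination of shifts, the compression to `ℓ²(ℕ)` of the Laurent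
operator of `p` on `ℓ²(ℤ)`, so by Parseval's identity its norm is at most `‖p‖_∞`. These
operators therefore converge, and since Fourier coefficients are continuous for the uniform norm,
the limit has matrix `f̂(j - k) • id`. On the other hand the `l`-th diagonal of this matrix has
supremum `‖f̂(l)‖`, so it is in the Wiener class only if `f̂` is absolutely summable.
-/

open scoped ENNReal lp
open Filter Topology Function

namespace lp

section Reindex

variable {𝕜 E : Type*} [NontriviallyNormedField 𝕜] [NormedAddCommGroup E] [NormedSpace 𝕜 E]
  {ι κ : Type*} {p : ℝ≥0∞} {e : ι → κ}

theorem sum_norm_rpow_comp_le (hp : 0 < p.toReal) (he : Injective e) (x : ℓ^p(κ, E))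
    (s : Finset ι) : ∑ i ∈ s, ‖x (e i)‖ ^ p.toReal ≤ ‖x‖ ^ p.toReal := by
  simpa using lp.sum_rpow_le_norm_rpow hp x (s.map ⟨e, he⟩)

theorem sum_norm_rpow_extend_le (hp : 0 < p.toReal) (he : Injective e) (x : ℓ^p(ι, E))
    (s : Finset κ) : ∑ k ∈ s, ‖extend e (x : ι → E) 0 k‖ ^ p.toReal ≤ ‖x‖ ^ p.toReal := by
  rw [← Finset.sum_preimage e s he.injOn _ fun k _ hk => by
    simp [extend_apply' _ _ _ hk, Real.zero_rpow hp.ne']]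
  simpa only [he.extend_apply] using lp.sum_rpow_le_norm_rpow hp x _

variable (𝕜 E)

def comapDomain (e : ι → κ) (he : Injective e) : ℓ²(κ, E) →L[𝕜] ℓ²(ι, E) :=
  LinearMap.mkContinuous
    { toFun := fun x => ⟨x ∘ e, memℓp_gen' (sum_norm_rpow_comp_le (by norm_num) he x)⟩
      map_add' := fun _ _ => rfl
      map_smul' := fun _ _ => rfl }
    1 fun x => by
      rw [one_mul]
      exact lp.norm_le_of_forall_sum_le (by norm_num) (norm_nonneg x)
        (sum_norm_rpow_comp_le (by norm_num) he x)

def extendDomain (e : ι → κ) (he : Injective e) : ℓ²(ι, E) →L[𝕜] ℓ²(κ, E) :=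
  LinearMap.mkContinuous
    { toFun := fun x =>
        ⟨extend e (x : ι → E) (0 : κ → E), memℓp_gen' (sum_norm_rpow_extend_le (by norm_num) he x)⟩
      map_add' := fun x y => lp.ext <| by
        change extend e ⇑(x + y) 0 = extend e ⇑x 0 + extend e ⇑y 0
        rw [lp.coeFn_add, ← extend_add, add_zero]
      map_smul' := fun c x => lp.ext <| by
        change extend e ⇑(c • x) 0 = c • extend e ⇑x 0
        rw [lp.coeFn_smul, ← extend_smul, smul_zero] }
    1 fun x => by
      rw [one_mul]
      exact lp.norm_le_of_forall_sum_le (by norm_num) (norm_nonneg x)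
        (sum_norm_rpow_extend_le (by norm_num) he x)

variable {𝕜 E}

@[simp]
theorem comapDomain_apply (he : Injective e) (x : ℓ²(κ, E)) (i : ι) :
    comapDomain 𝕜 E e he x i = x (e i) :=
  rfl

theorem norm_comapDomain_le (he : Injective e) : ‖comapDomain 𝕜 E e he‖ ≤ 1 :=
  LinearMap.mkContinuous_norm_le _ zero_le_one _

theorem norm_extendDomain_le (he : Injective e) : ‖extendDomain 𝕜 E e he‖ ≤ 1 :=
  LinearMap.mkContinuous_norm_le _ zero_le_one _

theorem extendDomain_single [DecidableEq ι] [DecidableEq κ] (he : Injective e) (i : ι) (v : E) :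
    extendDomain 𝕜 E e he (lp.single 2 i v) = lp.single 2 (e i) v := by
  ext k
  change extend e _ (0 : κ → E) k = _
  by_cases hk : ∃ i', e i' = k
  · obtain ⟨i', rfl⟩ := hk
    simp [he.extend_apply, lp.single_apply, Pi.single_apply, he.eq_iff]
  · rw [extend_apply' _ _ _ hk, lp.single_apply, Pi.single_eq_of_ne (fun h => hk ⟨i, h.symm⟩)]
    rfl

end Reindex

section Shift

variable {𝕜 E : Type*} [NontriviallyNormedField 𝕜] [NormedAddCommGroup E] [NormedSpace 𝕜 E]

variable (𝕜 E) in
/-- `(shift l x) k = x (k + l)`, where `x` is extended by zero to negative indices. -/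
def shift (l : ℤ) : ℓ²(ℕ, E) →L[𝕜] ℓ²(ℕ, E) :=
  comapDomain 𝕜 E ((↑) : ℕ → ℤ) Nat.cast_injective ∘L
    extendDomain 𝕜 E (fun j : ℕ => (j : ℤ) - l) (sub_left_injective.comp Nat.cast_injective)

theorem norm_shift_le (l : ℤ) : ‖shift 𝕜 E l‖ ≤ 1 :=
  (ContinuousLinearMap.opNorm_comp_le _ _).trans
    (mul_le_one₀ (norm_comapDomain_le _) (norm_nonneg _) (norm_extendDomain_le _))

theorem shift_single (l : ℤ) (j : ℕ) (v : E) (k : ℕ) :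
    shift 𝕜 E l (lp.single 2 j v) k = if (j : ℤ) = k + l then v else 0 := by
  rw [shift, ContinuousLinearMap.comp_apply, extendDomain_single, comapDomain_apply,
    lp.single_apply, Pi.single_apply]
  exact if_congr (by omega) rfl rfl

end Shift

section DiagMul

variable {𝕜 E F : Type*} [NontriviallyNormedField 𝕜] [NormedAddCommGroup E] [NormedSpace 𝕜 E]
  [NormedAddCommGroup F] [NormedSpace 𝕜 F] {ι : Type*} {p : ℝ≥0∞}

theorem norm_apply_apply_le_norm_smul_toNorm (D : ℓ^∞(ι, E →L[𝕜] F)) (x : ℓ^p(ι, E)) (i : ι) :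
    ‖D i (x i)‖ ≤ ‖(‖D‖ • lp.toNorm x) i‖ :=
  calc ‖D i (x i)‖ ≤ ‖D i‖ * ‖x i‖ := (D i).le_opNorm (x i)
    _ ≤ ‖D‖ * ‖x i‖ := by gcongr; exact lp.norm_apply_le_norm ENNReal.top_ne_zero D i
    _ = (‖D‖ • lp.toNorm x) i := by simp
    _ ≤ ‖(‖D‖ • lp.toNorm x) i‖ := Real.le_norm_self _

variable [Fact (1 ≤ p)]

variable (p) in
def diagMul (D : ℓ^∞(ι, E →L[𝕜] F)) : ℓ^p(ι, E) →L[𝕜] ℓ^p(ι, F) :=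
  LinearMap.mkContinuous
    { toFun := fun x =>
        ⟨fun i => D i (x i), (lp.memℓp _).mono' (norm_apply_apply_le_norm_smul_toNorm D x)⟩
      map_add' := fun x y => lp.ext <| funext fun i => map_add (D i) (x i) (y i)
      map_smul' := fun c x => lp.ext <| funext fun i => map_smul (D i) c (x i) }
    ‖D‖ fun x => by
      refine (lp.norm_mono (zero_lt_one.trans_le Fact.out).ne'
        (norm_apply_apply_le_norm_smul_toNorm D x)).trans_eq ?_
      rw [norm_smul, norm_norm, lp.norm_toNorm]

@[simp]
theorem diagMul_apply (D : ℓ^∞(ι, E →L[𝕜] F)) (x : ℓ^p(ι, E)) (i : ι) :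
    diagMul p D x i = D i (x i) :=
  rfl

theorem norm_diagMul_le (D : ℓ^∞(ι, E →L[𝕜] F)) : ‖diagMul p D‖ ≤ ‖D‖ :=
  LinearMap.mkContinuous_norm_le _ (norm_nonneg D) _

end DiagMul

theorem opNorm_le_of_forall_sum_single {𝕜 E F ι : Type*} [NontriviallyNormedField 𝕜]
    [NormedAddCommGroup E] [NormedSpace 𝕜 E] [NormedAddCommGroup F] [NormedSpace 𝕜 F]
    [DecidableEq ι] {p : ℝ≥0∞} [Fact (1 ≤ p)] (hp : p ≠ ∞) (A : ℓ^p(ι, E) →L[𝕜] F) {C : ℝ}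
    (hC : 0 ≤ C)
    (h : ∀ (s : Finset ι) (x : ι → E),
      ‖A (∑ i ∈ s, lp.single p i (x i))‖ ≤ C * ‖∑ i ∈ s, lp.single p i (x i)‖) :
    ‖A‖ ≤ C :=
  A.opNorm_le_bound hC fun y =>
    (isClosed_le A.continuous.norm (continuous_const.mul continuous_norm)).mem_of_tendsto
      (lp.hasSum_single hp y) (Eventually.of_forall fun s => h s y)

end lp

theorem exists_tendsto_of_norm_le_norm {V X Y 𝓕 𝓖 : Type*} [AddCommGroup V]
    [NormedAddCommGroup X] [CompleteSpace X] [NormedAddCommGroup Y]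
    [FunLike 𝓕 V X] [AddMonoidHomClass 𝓕 V X] [FunLike 𝓖 V Y] [AddMonoidHomClass 𝓖 V Y]
    (Λ : 𝓕) (Γ : 𝓖) (h : ∀ v, ‖Λ v‖ ≤ ‖Γ v‖) {c : ℕ → V} {g : Y}
    (hc : Tendsto (fun n => Γ (c n)) atTop (𝓝 g)) :
    ∃ A, Tendsto (fun n => Λ (c n)) atTop (𝓝 A) := by
  refine cauchySeq_tendsto_of_complete (Metric.cauchySeq_iff.2 fun ε hε => ?_)
  obtain ⟨N, hN⟩ := Metric.cauchySeq_iff.1 hc.cauchySeq ε hε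
  refine ⟨N, fun m hm n hn => ?_⟩
  rw [dist_eq_norm, ← map_sub]
  refine (h _).trans_lt ?_
  rw [map_sub, ← dist_eq_norm]
  exact hN m hm n hn

section Fourier

open MeasureTheory AddCircle ComplexConjugate

variable {T : ℝ} [Fact (0 < T)]

theorem Continuous.integrable_haarAddCircle {F : Type*} [NormedAddCommGroup F]
    {f : AddCircle T → F} (hf : Continuous f) : Integrable f haarAddCircle :=
  hf.integrable_of_hasCompactSupport (.of_compactSpace f)

theorem integral_fourier_mul_conj_fourier (m n : ℤ) :
    ∫ t : AddCircle T, fourier m t * conj (fourier n t) ∂haarAddCircle =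
      if n = m then 1 else 0 := by
  rw [← orthonormal_iff_ite.1 (orthonormal_fourier (T := T)) n m]
  exact (ContinuousMap.inner_toLp _ _ _).symm

section InnerProduct

variable {E : Type*} [NormedAddCommGroup E] [InnerProductSpace ℂ E]

theorem ofReal_norm_sq_eq_inner_self (x : E) : ((‖x‖ ^ 2 : ℝ) : ℂ) = inner ℂ x x := by
  exact_mod_cast (inner_self_eq_norm_sq_to_K (𝕜 := ℂ) x).symm

/-- Parseval's identity for trigonometric polynomials with coefficients in `E`, whose frequencies
`φ i` need not be distinct. -/
theorem integral_norm_sum_fourier_smul_sq {ι : Type*} (s : Finset ι) (φ : ι → ℤ) (v : ι → E) :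
    ∫ t : AddCircle T, ‖∑ i ∈ s, fourier (-φ i) t • v i‖ ^ 2 ∂haarAddCircle =
      ‖(∑ i ∈ s, lp.single 2 (φ i) (v i) : ℓ²(ℤ, E))‖ ^ 2 := by
  classical
  have h_pt : ∀ t : AddCircle T, ((‖∑ i ∈ s, fourier (-φ i) t • v i‖ ^ 2 : ℝ) : ℂ) =
      ∑ i ∈ s, ∑ j ∈ s, fourier (φ i) t * conj (fourier (φ j) t) * inner ℂ (v i) (v j) := by
    intro t
    simp_rw [ofReal_norm_sq_eq_inner_self, sum_inner, inner_sum,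
      inner_smul_left, inner_smul_right, fourier_neg, Complex.conj_conj, mul_assoc]
  have h_lp : ((‖(∑ i ∈ s, lp.single 2 (φ i) (v i) : ℓ²(ℤ, E))‖ ^ 2 : ℝ) : ℂ) =
      ∑ i ∈ s, ∑ j ∈ s, (if φ j = φ i then 1 else 0) * inner ℂ (v i) (v j) := by
    simp_rw [ofReal_norm_sq_eq_inner_self, sum_inner, inner_sum,
      lp.inner_single_left, lp.single_apply, Pi.single_apply]
    refine Finset.sum_congr rfl fun i _ => Finset.sum_congr rfl fun j _ => ?_
    split_ifs <;> simp_all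
  apply Complex.ofReal_injective
  rw [h_lp, ← integral_complex_ofReal]
  simp_rw [h_pt]
  rw [integral_finsetSum _ fun i _ => (by fun_prop : Continuous _).integrable_haarAddCircle]
  refine Finset.sum_congr rfl fun i _ => ?_
  rw [integral_finsetSum _ fun j _ => (by fun_prop : Continuous _).integrable_haarAddCircle]
  refine Finset.sum_congr rfl fun j _ => ?_
  rw [integral_mul_const, integral_fourier_mul_conj_fourier]

end InnerProduct

variable {E : Type*} [NormedAddCommGroup E] [NormedSpace ℂ E]

theorem norm_fourierCoeff_le (g : C(AddCircle T, E)) (n : ℤ) : ‖fourierCoeff g n‖ ≤ ‖g‖ := by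
  have h : ∀ t, ‖fourier (-n) t • g t‖ ≤ ‖g‖ := fun t => by
    rw [norm_smul]
    calc ‖fourier (-n) t‖ * ‖g t‖ ≤ ‖fourier (T := T) (-n)‖ * ‖g‖ :=
          mul_le_mul (ContinuousMap.norm_coe_le_norm _ t) (g.norm_coe_le_norm t) (norm_nonneg _)
            (norm_nonneg _)
      _ = ‖g‖ := by rw [fourier_norm, one_mul]
  calc ‖fourierCoeff g n‖ ≤ ‖g‖ * (haarAddCircle (T := T)).real Set.univ :=
        norm_integral_le_of_norm_le_const (ae_of_all _ h)
    _ = ‖g‖ := by simp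

variable (T E) in
def fourierCoeffCLM (n : ℤ) : C(AddCircle T, E) →L[ℂ] E :=
  LinearMap.mkContinuous
    { toFun := fun g => fourierCoeff g n
      map_add' := fun f g => by
        rw [ContinuousMap.coe_add, fourierCoeff.add f.continuous.integrable_haarAddCircle
          g.continuous.integrable_haarAddCircle, Pi.add_apply]
      map_smul' := fun c g => fourierCoeff.const_smul g c n }
    1 fun g => by rw [one_mul]; exact norm_fourierCoeff_le g n

@[simp]
theorem fourierCoeffCLM_apply (n : ℤ) (g : C(AddCircle T, E)) :
    fourierCoeffCLM T E n g = fourierCoeff g n :=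
  rfl

theorem fourierCoeff_linearCombination_fourier (c : ℤ →₀ ℂ) (n : ℤ) :
    fourierCoeff (Finsupp.linearCombination ℂ (fourier (T := T)) c) n = c n := by
  rw [← fourierCoeffCLM_apply, Finsupp.linearCombination_apply, map_finsuppSum]
  simp only [map_smul, fourierCoeffCLM_apply, fourierCoeff_fourier, smul_eq_mul, Pi.single_apply,
    mul_ite, mul_one, mul_zero]
  exact Finsupp.sum_ite_self_eq c n

theorem exists_seq_linearCombination_fourier_tendsto (g : C(AddCircle T, ℂ)) :
    ∃ c : ℕ → ℤ →₀ ℂ,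
      Tendsto (fun n => Finsupp.linearCombination ℂ (fourier (T := T)) (c n)) atTop (𝓝 g) := by
  have hg : g ∈ closure (Set.range (Finsupp.linearCombination ℂ (fourier (T := T)))) := by
    rw [← LinearMap.coe_range, Finsupp.range_linearCombination,
      ← Submodule.topologicalClosure_coe, span_fourier_closure_eq_top]
    trivial
  obtain ⟨u, hu, hlim⟩ := mem_closure_iff_seq_limit.1 hg
  choose c hc using hu
  exact ⟨c, by simpa only [hc] using hlim⟩

end Fourier

section Laurent

open MeasureTheory AddCircle

variable {T : ℝ} {E : Type*} [NormedAddCommGroup E] [InnerProductSpace ℂ E] {ι : Type*}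

theorem sum_fourier_smul_smul_eq (c : ℤ →₀ ℂ) (s : Finset ι) (φ : ι → ℤ) (x : ι → E)
    (t : AddCircle T) :
    ∑ p ∈ c.support ×ˢ s, fourier (-(φ p.2 - p.1)) t • (c p.1 • x p.2) =
      Finsupp.linearCombination ℂ fourier c t • ∑ i ∈ s, fourier (-φ i) t • x i := by
  have hc : Finsupp.linearCombination ℂ fourier c t = ∑ l ∈ c.support, c l * fourier l t := by
    simp only [Finsupp.linearCombination_apply, Finsupp.sum, ContinuousMap.sum_apply,
      ContinuousMap.smul_apply, smul_eq_mul]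
  rw [hc, Finset.sum_product, Finset.sum_smul]
  refine Finset.sum_congr rfl fun l _ => ?_
  rw [Finset.smul_sum]
  refine Finset.sum_congr rfl fun i _ => ?_
  rw [smul_smul, smul_smul, neg_sub, sub_eq_add_neg, fourier_add]
  ring_nf

variable [Fact (0 < T)]

/-- The Laurent operator of a trigonometric polynomial is bounded by its uniform norm. -/
theorem norm_sum_single_sub_le (c : ℤ →₀ ℂ) (s : Finset ι) (φ : ι → ℤ) (x : ι → E) :
    ‖(∑ p ∈ c.support ×ˢ s, lp.single 2 (φ p.2 - p.1) (c p.1 • x p.2) : ℓ²(ℤ, E))‖ ≤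
      ‖Finsupp.linearCombination ℂ (fourier (T := T)) c‖ *
        ‖(∑ i ∈ s, lp.single 2 (φ i) (x i) : ℓ²(ℤ, E))‖ := by
  set Γ := Finsupp.linearCombination ℂ (fourier (T := T)) c
  refine (pow_le_pow_iff_left₀ (norm_nonneg _) (by positivity) two_ne_zero).1 ?_
  calc _ = ∫ t : AddCircle T,
        ‖∑ p ∈ c.support ×ˢ s, fourier (-(φ p.2 - p.1)) t • (c p.1 • x p.2)‖ ^ 2 ∂haarAddCircle :=
        (integral_norm_sum_fourier_smul_sq _ _ _).symm
    _ = ∫ t : AddCircle T, ‖Γ t • ∑ i ∈ s, fourier (-φ i) t • x i‖ ^ 2 ∂haarAddCircle := by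
        simp_rw [sum_fourier_smul_smul_eq]
        rfl
    _ ≤ ∫ t : AddCircle T, ‖Γ‖ ^ 2 * ‖∑ i ∈ s, fourier (-φ i) t • x i‖ ^ 2 ∂haarAddCircle := by
        refine integral_mono (by fun_prop : Continuous _).integrable_haarAddCircle
          (by fun_prop : Continuous _).integrable_haarAddCircle fun t => ?_
        rw [norm_smul, mul_pow]
        gcongr
        exact Γ.norm_coe_le_norm t
    _ = _ := by rw [integral_const_mul, integral_norm_sum_fourier_smul_sq, mul_pow]

theorem norm_linearCombination_shift_le (c : ℤ →₀ ℂ) :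
    ‖Finsupp.linearCombination ℂ (lp.shift ℂ E) c‖ ≤
      ‖Finsupp.linearCombination ℂ (fourier (T := T)) c‖ := by
  classical
  refine lp.opNorm_le_of_forall_sum_single (by norm_num) _ (norm_nonneg _) fun s x => ?_
  set y : ℓ²(ℕ, E) := ∑ j ∈ s, lp.single 2 j (x j)
  set W : ℓ²(ℤ, E) := ∑ p ∈ c.support ×ˢ s, lp.single 2 ((p.2 : ℤ) - p.1) (c p.1 • x p.2)
  -- `W` is the image of `y` under the Laurent operator, whose compression to `ℓ²(ℕ)` is the
  -- Toeplitz operator.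
  have hW : Finsupp.linearCombination ℂ (lp.shift ℂ E) c y =
      lp.comapDomain ℂ E ((↑) : ℕ → ℤ) Nat.cast_injective W := by
    simp only [y, W, Finsupp.linearCombination_apply, Finsupp.sum, lp.shift, map_sum,
      sum_apply, smul_apply, map_smul, ContinuousLinearMap.comp_apply, lp.extendDomain_single,
      Finset.sum_product, lp.single_smul]
    exact Finset.sum_comm
  have hy : (∑ j ∈ s, lp.single 2 (j : ℤ) (x j) : ℓ²(ℤ, E)) =
      lp.extendDomain ℂ E ((↑) : ℕ → ℤ) Nat.cast_injective y := by
    simp [y, map_sum, lp.extendDomain_single]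
  calc ‖Finsupp.linearCombination ℂ (lp.shift ℂ E) c y‖ ≤ ‖W‖ := by
        rw [hW]
        exact (ContinuousLinearMap.le_of_opNorm_le _ (lp.norm_comapDomain_le _) W).trans_eq
          (one_mul _)
    _ ≤ ‖Finsupp.linearCombination ℂ (fourier (T := T)) c‖ * ‖lp.extendDomain ℂ E _ _ y‖ := by
        rw [← hy]
        exact norm_sum_single_sub_le c s _ x
    _ ≤ ‖Finsupp.linearCombination ℂ (fourier (T := T)) c‖ * ‖y‖ := by
        gcongr
        exact (ContinuousLinearMap.le_of_opNorm_le _ (lp.norm_extendDomain_le _) y).trans_eq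
          (one_mul _)

end Laurent

section MatrixClasses

variable {E : Type} [NormedAddCommGroup E] [InnerProductSpace ℂ E]
  {T S : ℕ → ℕ → (E →L[ℂ] E)} {A B : ellTwo E →L[ℂ] ellTwo E}

theorem Represents.zero : Represents (0 : ℕ → ℕ → (E →L[ℂ] E)) 0 :=
  fun _ _ _ => rfl

theorem Represents.add (hA : Represents T A) (hB : Represents S B) :
    Represents (T + S) (A + B) :=
  fun j x k => by simp [hA j x k, hB j x k]

theorem Represents.smul (c : ℂ) (hA : Represents T A) : Represents (c • T) (c • A) :=
  fun j x k => by simp [hA j x k]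

theorem Represents.sum {ι : Type*} (s : Finset ι) {T : ι → ℕ → ℕ → (E →L[ℂ] E)}
    {A : ι → ellTwo E →L[ℂ] ellTwo E} (h : ∀ i ∈ s, Represents (T i) (A i)) :
    Represents (∑ i ∈ s, T i) (∑ i ∈ s, A i) := by
  classical
  induction s using Finset.induction_on with
  | empty => simpa using Represents.zero
  | insert i s hi ih =>
    rw [Finset.sum_insert hi, Finset.sum_insert hi]
    exact (h i (s.mem_insert_self i)).add (ih fun i' hi' => h i' (Finset.mem_insert_of_mem hi'))

theorem Represents.diagMul_comp (D : ℓ^∞(ℕ, E →L[ℂ] E)) (hA : Represents T A) :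
    Represents (fun k j => D k ∘L T k j) (lp.diagMul 2 D ∘L A) :=
  fun j x k => by simp [hA j x k]

theorem Represents.of_tendsto {ι : Type*} {L : Filter ι} [L.NeBot]
    {B : ι → ellTwo E →L[ℂ] ellTwo E} {T' : ι → ℕ → ℕ → (E →L[ℂ] E)}
    (hB : Tendsto B L (𝓝 A)) (hT : ∀ k j, Tendsto (fun i => T' i k j) L (𝓝 (T k j)))
    (h : ∀ i, Represents (T' i) (B i)) : Represents T A := fun j x k => by
  have hentry : Continuous fun C : ellTwo E →L[ℂ] ellTwo E => C (lp.single 2 j x) k :=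
    (lp.evalCLM ℂ (fun _ : ℕ => E) 2 k).continuous.comp
      (ContinuousLinearMap.apply ℂ (ellTwo E) (lp.single 2 j x : ellTwo E)).continuous
  refine tendsto_nhds_unique ((hentry.tendsto A).comp hB) ?_
  simp_rw [Function.comp_def, h _ j x k]
  exact ((ContinuousLinearMap.apply ℂ E x).continuous.tendsto _).comp (hT k j)

theorem represents_shift (l : ℤ) :
    Represents (fun k j => if (j : ℤ) = k + l then ContinuousLinearMap.id ℂ E else 0)
      (lp.shift ℂ E l) :=
  fun j x k => by rw [lp.shift_single]; dsimp only; split_ifs <;> rfl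

theorem PolyMat.zero : PolyMat (0 : ℕ → ℕ → (E →L[ℂ] E)) :=
  ⟨⟨0, fun _ _ _ => rfl⟩, 0, fun _ _ => by simp⟩

theorem PolyMat.add (hT : PolyMat T) (hS : PolyMat S) : PolyMat (T + S) := by
  obtain ⟨⟨N, hN⟩, M, hM⟩ := hT
  obtain ⟨⟨N', hN'⟩, M', hM'⟩ := hS
  refine ⟨⟨max N N', fun k j h => ?_⟩, M + M', fun k j => ?_⟩
  · have : (N : ℤ) < |(j : ℤ) - k| ∧ (N' : ℤ) < |(j : ℤ) - k| := by push_cast at h; omega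
    simp [hN k j this.1, hN' k j this.2]
  · exact (norm_add_le _ _).trans (add_le_add (hM k j) (hM' k j))

theorem PolyMat.smul (c : ℂ) (hT : PolyMat T) : PolyMat (c • T) := by
  obtain ⟨⟨N, hN⟩, M, hM⟩ := hT
  refine ⟨⟨N, fun k j h => by simp [hN k j h]⟩, ‖c‖ * M, fun k j => ?_⟩
  simpa [norm_smul] using mul_le_mul_of_nonneg_left (hM k j) (norm_nonneg c)

theorem PolyMat.diagMul_comp (D : ℓ^∞(ℕ, E →L[ℂ] E)) (hT : PolyMat T) :
    PolyMat (fun k j => D k ∘L T k j) := by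
  obtain ⟨⟨N, hN⟩, M, hM⟩ := hT
  refine ⟨⟨N, fun k j h => by simp [hN k j h]⟩, ‖D‖ * M, fun k j => ?_⟩
  calc ‖D k ∘L T k j‖ ≤ ‖D k‖ * ‖T k j‖ := ContinuousLinearMap.opNorm_comp_le _ _
    _ ≤ ‖D‖ * M := mul_le_mul (lp.norm_apply_le_norm ENNReal.top_ne_zero D k) (hM k j)
        (norm_nonneg _) (norm_nonneg D)

theorem polyMat_shift (l : ℤ) :
    PolyMat (fun k j => if (j : ℤ) = k + l then ContinuousLinearMap.id ℂ E else 0) := by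
  refine ⟨⟨l.natAbs, fun k j h => if_neg ?_⟩, 1, fun k j => ?_⟩
  · rw [lt_abs] at h
    omega
  · dsimp only
    split_ifs
    · exact ContinuousLinearMap.norm_id_le
    · simp

variable (E) in
/-- The operators with a polynomial matrix, of which `ContinuousClass` is the closure. -/
def polyClass : Submodule ℂ (ellTwo E →L[ℂ] ellTwo E) where
  carrier := {B | ∃ T, PolyMat T ∧ Represents T B}
  zero_mem' := ⟨0, PolyMat.zero, Represents.zero⟩
  add_mem' := fun ⟨T, hT, hA⟩ ⟨S, hS, hB⟩ => ⟨T + S, hT.add hS, hA.add hB⟩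
  smul_mem' := fun c _ ⟨T, hT, hA⟩ => ⟨c • T, hT.smul c, hA.smul c⟩

theorem shift_mem_polyClass (l : ℤ) : lp.shift ℂ E l ∈ polyClass E :=
  ⟨_, polyMat_shift l, represents_shift l⟩

theorem diagMul_comp_mem_polyClass (D : ℓ^∞(ℕ, E →L[ℂ] E)) (hA : A ∈ polyClass E) :
    lp.diagMul 2 D ∘L A ∈ polyClass E :=
  let ⟨_, hT, hTA⟩ := hA
  ⟨_, hT.diagMul_comp D, hTA.diagMul_comp D⟩

theorem ContinuousClass.of_tendsto {ι : Type*} {L : Filter ι} [L.NeBot]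
    {B : ι → ellTwo E →L[ℂ] ellTwo E} (hB : Tendsto B L (𝓝 A))
    (h : ∀ᶠ i in L, B i ∈ polyClass E) : ContinuousClass A :=
  mem_closure_of_tendsto hB h

end MatrixClasses

section Wiener

variable {E : Type} [NormedAddCommGroup E] [InnerProductSpace ℂ E] {T : ℕ → ℕ → (E →L[ℂ] E)}

def diagSup (T : ℕ → ℕ → (E →L[ℂ] E)) (l : ℤ) : ℝ :=
  sSup {r : ℝ | ∃ k j : ℕ, (j : ℤ) = (k : ℤ) + l ∧ r = ‖T k j‖}

theorem exists_mem_diagonal (l : ℤ) : ∃ k j : ℕ, (j : ℤ) = k + l := by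
  rcases le_or_gt 0 l with h | h
  · exact ⟨0, l.toNat, by omega⟩
  · exact ⟨(-l).toNat, 0, by omega⟩

theorem WienerMat.norm_le_diagSup (hT : WienerMat T) {k j : ℕ} {l : ℤ} (h : (j : ℤ) = k + l) :
    ‖T k j‖ ≤ diagSup T l :=
  le_csSup (hT.1 l) ⟨k, j, h, rfl⟩

theorem WienerMat.diagSup_nonneg (hT : WienerMat T) (l : ℤ) : 0 ≤ diagSup T l :=
  let ⟨_, _, h⟩ := exists_mem_diagonal l
  (norm_nonneg _).trans (hT.norm_le_diagSup h)

theorem WienerMat.exists_diagonal (hT : WienerMat T) (l : ℤ) :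
    ∃ D : ℓ^∞(ℕ, E →L[ℂ] E), ‖D‖ ≤ diagSup T l ∧ ∀ k j : ℕ, (j : ℤ) = k + l → D k = T k j := by
  set d : ℕ → E →L[ℂ] E := fun k => if 0 ≤ (k : ℤ) + l then T k ((k : ℤ) + l).toNat else 0
  have hd : ∀ k, ‖d k‖ ≤ diagSup T l := fun k => by
    by_cases h : 0 ≤ (k : ℤ) + l
    · simpa [d, h] using hT.norm_le_diagSup (by omega : (((k : ℤ) + l).toNat : ℤ) = k + l)
    · simpa [d, h] using hT.diagSup_nonneg l
  refine ⟨⟨d, memℓp_infty_iff.2 ⟨diagSup T l, Set.forall_mem_range.2 hd⟩⟩,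
    lp.norm_le_of_forall_le (hT.diagSup_nonneg l) hd, fun k j h => ?_⟩
  change d k = T k j
  simp only [d, if_pos (by omega : 0 ≤ (k : ℤ) + l), ← h, Int.toNat_natCast]

theorem WienerMat.exists_represents_continuousClass [CompleteSpace E] (hT : WienerMat T) :
    ∃ A : ellTwo E →L[ℂ] ellTwo E, Represents T A ∧ ContinuousClass A := by
  choose D hD_norm hD using hT.exists_diagonal
  set A : ℤ → ellTwo E →L[ℂ] ellTwo E := fun l => lp.diagMul 2 (D l) ∘L lp.shift ℂ E l
  set diag : ℤ → ℕ → ℕ → (E →L[ℂ] E) := fun l k j => if (j : ℤ) = k + l then T k j else 0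
  have hA_norm : ∀ l, ‖A l‖ ≤ diagSup T l := fun l =>
    calc ‖A l‖ ≤ ‖lp.diagMul 2 (D l)‖ * ‖lp.shift ℂ E l‖ :=
          ContinuousLinearMap.opNorm_comp_le _ _
      _ ≤ diagSup T l * 1 := mul_le_mul ((lp.norm_diagMul_le _).trans (hD_norm l))
          (lp.norm_shift_le l) (norm_nonneg _) (hT.diagSup_nonneg l)
      _ = diagSup T l := mul_one _
  have hA_rep : ∀ l, Represents (diag l) (A l) := fun l => by
    convert (represents_shift l).diagMul_comp (D l) using 1
    ext k j : 2
    by_cases h : (j : ℤ) = k + l <;> simp [diag, h, hD l k j]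
  have hA_sum : Tendsto (fun F : Finset ℤ => ∑ l ∈ F, A l) atTop (𝓝 (∑' l, A l)) :=
    (Summable.of_norm_bounded hT.2 hA_norm).hasSum
  have hdiag_sum : ∀ k j, Tendsto (fun F : Finset ℤ => (∑ l ∈ F, diag l) k j) atTop (𝓝 (T k j)) :=
    fun k j => tendsto_const_nhds.congr' <| by
      filter_upwards [eventually_ge_atTop {(j : ℤ) - k}] with F hF
      rw [Finset.sum_apply, Finset.sum_apply, Finset.sum_eq_single_of_mem _
        (hF (Finset.mem_singleton_self _)) fun l _ hl => if_neg (by omega)]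
      exact (if_pos (by omega)).symm
  refine ⟨∑' l, A l, Represents.of_tendsto hA_sum hdiag_sum fun F =>
    Represents.sum F fun l _ => hA_rep l, ContinuousClass.of_tendsto hA_sum ?_⟩
  exact Eventually.of_forall fun F =>
    Submodule.sum_mem _ fun l _ => diagMul_comp_mem_polyClass _ (shift_mem_polyClass l)

end Wiener

section Toeplitz

variable {E : Type} [NormedAddCommGroup E] [InnerProductSpace ℂ E]

theorem represents_linearCombination_shift (c : ℤ →₀ ℂ) :
    Represents (fun k j => c ((j : ℤ) - k) • ContinuousLinearMap.id ℂ E)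
      (Finsupp.linearCombination ℂ (lp.shift ℂ E) c) := by
  rw [Finsupp.linearCombination_apply, Finsupp.sum]
  convert Represents.sum c.support fun l _ => (represents_shift (E := E) l).smul (c l) using 1
  ext k j : 2
  have hcond : ∀ l : ℤ, ((j : ℤ) = k + l) ↔ ((j : ℤ) - k = l) := fun l => by omega
  simp only [Finset.sum_apply, Pi.smul_apply, smul_ite, smul_zero, hcond, Finset.sum_ite_eq]
  split_ifs with h
  · rfl
  · rw [Finsupp.notMem_support_iff.1 h, zero_smul]

theorem linearCombination_shift_mem_polyClass (c : ℤ →₀ ℂ) :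
    Finsupp.linearCombination ℂ (lp.shift ℂ E) c ∈ polyClass E :=
  Submodule.sum_mem _ fun l _ => Submodule.smul_mem _ _ (shift_mem_polyClass l)

theorem exists_toeplitz_continuousClass [CompleteSpace E] {T : ℝ} [Fact (0 < T)]
    (g : C(AddCircle T, ℂ)) :
    ∃ A : ellTwo E →L[ℂ] ellTwo E,
      Represents (fun k j => fourierCoeff g ((j : ℤ) - k) • ContinuousLinearMap.id ℂ E) A ∧
        ContinuousClass A := by
  obtain ⟨c, hc⟩ := exists_seq_linearCombination_fourier_tendsto g
  obtain ⟨A, hA⟩ := exists_tendsto_of_norm_le_norm (Finsupp.linearCombination ℂ (lp.shift ℂ E))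
    (Finsupp.linearCombination ℂ (fourier (T := T))) norm_linearCombination_shift_le hc
  refine ⟨A, Represents.of_tendsto hA (fun k j => ?_) fun n =>
    represents_linearCombination_shift (c n), ContinuousClass.of_tendsto hA <|
      Eventually.of_forall fun n => linearCombination_shift_mem_polyClass (c n)⟩
  have hcoeff := ((fourierCoeffCLM T ℂ ((j : ℤ) - k)).continuous.tendsto g).comp hc
  simp only [Function.comp_def, fourierCoeffCLM_apply, fourierCoeff_linearCombination_fourier]
    at hcoeff
  exact hcoeff.smul_const _

theorem diagSup_toeplitz [Nontrivial E] (a : ℤ → ℂ) (l : ℤ) :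
    diagSup (fun k j => a ((j : ℤ) - k) • ContinuousLinearMap.id ℂ E) l = ‖a l‖ := by
  have hdiag : {r : ℝ | ∃ k j : ℕ, (j : ℤ) = k + l ∧
      r = ‖a ((j : ℤ) - k) • ContinuousLinearMap.id ℂ E‖} = {‖a l‖} := by
    ext r
    constructor
    · rintro ⟨k, j, h, rfl⟩
      rw [show (j : ℤ) - k = l by omega, norm_smul, ContinuousLinearMap.norm_id, mul_one]
      rfl
    · rintro rfl
      obtain ⟨k, j, h⟩ := exists_mem_diagonal l
      exact ⟨k, j, h, by
        rw [show (j : ℤ) - k = l by omega, norm_smul, ContinuousLinearMap.norm_id, mul_one]⟩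
  rw [diagSup, hdiag, csSup_singleton]

theorem WienerMat.summable_norm_of_toeplitz [Nontrivial E] {a : ℤ → ℂ}
    (h : WienerMat fun k j => a ((j : ℤ) - k) • ContinuousLinearMap.id ℂ E) :
    Summable fun l => ‖a l‖ :=
  h.2.congr (diagSup_toeplitz a)

end Toeplitz

instance fact_zero_lt_two_pi : Fact (0 < 2 * Real.pi) :=
  ⟨Real.two_pi_pos⟩

theorem exists_fourierCoeff_eq_scalarFourierCoeff {f : ℝ → ℂ} (hf : Continuous f)
    (hper : Periodic f (2 * Real.pi)) :
    ∃ g : C(AddCircle (2 * Real.pi), ℂ), ∀ l, fourierCoeff g l = scalarFourierCoeff f l := by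
  refine ⟨⟨hper.lift, hf.quotient_liftOn' _⟩, fun l => ?_⟩
  rw [fourierCoeff_eq_intervalIntegral _ _ 0, zero_add, scalarFourierCoeff, Complex.real_smul]
  push_cast
  congr 1
  refine intervalIntegral.integral_congr fun t _ => ?_
  simp only [fourier_coe_apply, smul_eq_mul]
  rw [mul_comm]
  congr 2
  field_simp
  push_cast
  ring

/-- `𝒜(ℓ²(H)) ⊊ 𝒞(ℓ²(H))`: every Wiener-class matrix gives an operator in
`𝒞(ℓ²(H))`, while for any continuous `f` on `𝕋` whose Fourier series is not absolutely
convergent, the Toeplitz matrix `M_f = (f̂(j−k)·Id)` gives an operator in `𝒞(ℓ²(H))`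
although `M_f` is not in the Wiener class. -/
theorem wiener_strict_subset_continuousClass [Nontrivial H] :
    (∀ T : ℕ → ℕ → (H →L[ℂ] H), WienerMat T →
      ∃ A : ellTwo H →L[ℂ] ellTwo H, Represents T A ∧ ContinuousClass A) ∧
    (∀ f : ℝ → ℂ, Continuous f → Function.Periodic f (2 * Real.pi) →
      (¬ Summable fun l : ℤ => ‖scalarFourierCoeff f l‖) →
      ((∃ A : ellTwo H →L[ℂ] ellTwo H,
          Represents (fun k j => scalarFourierCoeff f ((j : ℤ) - (k : ℤ)) •
            ContinuousLinearMap.id ℂ H) A ∧ ContinuousClass A) ∧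
        ¬ WienerMat (fun k j => scalarFourierCoeff f ((j : ℤ) - (k : ℤ)) •
            ContinuousLinearMap.id ℂ H))) := by
  refine ⟨fun T hT => hT.exists_represents_continuousClass, fun f hf hper hns =>
    ⟨?_, fun hW => hns hW.summable_norm_of_toeplitz⟩⟩
  obtain ⟨g, hg⟩ := exists_fourierCoeff_eq_scalarFourierCoeff hf hper
  simpa only [hg] using exists_toeplitz_continuousClass (E := H) g
end
end

section
/- Let A = (a_{kj}) be a scalar Schur multiplier on B(ℓ²) and T ∈ B(H). Then 𝐀 = (a_{kj} T) is both a left and right Schur multiplier on B(ℓ²(H)), and ‖𝐀‖_{M_l(ℓ²(H))} = ‖𝐀‖_{M_r(ℓ²(H))} = ‖A‖_{M(ℓ²)} · ‖T‖_{B(H)}. -/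
noncomputable section

variable {H : Type} [NormedAddCommGroup H] [InnerProductSpace ℂ H] [CompleteSpace H]
  [TopologicalSpace.SeparableSpace H]

/-- `C` is a bound for `T` as a right Schur multiplier: for every bounded `B = (S_{kj})`,
the Schur product `B * A = (S_{kj} ∘ T_{kj})` is bounded with norm at most `C ‖B‖`. -/
def IsRightMultBound (T : ℕ → ℕ → (H →L[ℂ] H)) (C : ℝ) : Prop :=
  ∀ (S : ℕ → ℕ → (H →L[ℂ] H)) (B : ellTwo H →L[ℂ] ellTwo H), Represents S B →
    ∃ AB : ellTwo H →L[ℂ] ellTwo H,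
      Represents (fun k j => (S k j).comp (T k j)) AB ∧ ‖AB‖ ≤ C * ‖B‖

/-- `C` is a bound for `T` as a left Schur multiplier: for every bounded `B = (S_{kj})`,
the Schur product `A * B = (T_{kj} ∘ S_{kj})` is bounded with norm at most `C ‖B‖`. -/
def IsLeftMultBound (T : ℕ → ℕ → (H →L[ℂ] H)) (C : ℝ) : Prop :=
  ∀ (S : ℕ → ℕ → (H →L[ℂ] H)) (B : ellTwo H →L[ℂ] ellTwo H), Represents S B →
    ∃ AB : ellTwo H →L[ℂ] ellTwo H,
      Represents (fun k j => (T k j).comp (S k j)) AB ∧ ‖AB‖ ≤ C * ‖B‖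

/-- The right Schur-multiplier norm `‖T‖_{M_r(ℓ²(H))}`. -/
def rightMultNorm (T : ℕ → ℕ → (H →L[ℂ] H)) : ℝ :=
  sInf {C : ℝ | 0 ≤ C ∧ IsRightMultBound T C}

/-- The left Schur-multiplier norm `‖T‖_{M_l(ℓ²(H))}`. -/
def leftMultNorm (T : ℕ → ℕ → (H →L[ℂ] H)) : ℝ :=
  sInf {C : ℝ | 0 ≤ C ∧ IsLeftMultBound T C}

/-- A bounded operator on scalar `ℓ²` represented by the scalar matrix `a = (a_{kj})`. -/
def RepresentsC (a : ℕ → ℕ → ℂ) (A : ellTwo ℂ →L[ℂ] ellTwo ℂ) : Prop :=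
  ∀ (j : ℕ) (c : ℂ) (k : ℕ), A (lp.single 2 j c) k = a k j * c

/-- `C` is a bound for the scalar matrix `a` as a Schur multiplier on `B(ℓ²)`. -/
def IsScalarMultBound (a : ℕ → ℕ → ℂ) (C : ℝ) : Prop :=
  ∀ (b : ℕ → ℕ → ℂ) (B : ellTwo ℂ →L[ℂ] ellTwo ℂ), RepresentsC b B →
    ∃ AB : ellTwo ℂ →L[ℂ] ellTwo ℂ,
      RepresentsC (fun k j => a k j * b k j) AB ∧ ‖AB‖ ≤ C * ‖B‖

/-- The scalar Schur multiplier norm `‖a‖_{M(ℓ²)}`. -/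
def scalarMultNorm (a : ℕ → ℕ → ℂ) : ℝ :=
  sInf {C : ℝ | 0 ≤ C ∧ IsScalarMultBound a C}

/-!
Upper bound. Compressing an operator `B = (S_{kj})` on `ℓ²(H)` along unit vectors `η_k, ξ_j` gives
the scalar matrix `(⟪η_k, S_{kj} ξ_j⟫)` of norm at most `‖B‖`. Applying the scalar multiplier `a`
and pairing with the sequences of norms of arbitrary vectors bounds
`|∑ a_{kj} ⟪η_k, S_{kj} ξ_j⟫|` by `D ‖B‖ ‖η‖ ‖ξ‖` on finite sections; choosing `η` to be the
Schur product applied to `ξ` shows that `(a_{kj} S_{kj})` is an operator of norm at most `D ‖B‖`.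
Since `(a_{kj} T) S_{kj} = T (a_{kj} S_{kj})` and `S_{kj} (a_{kj} T) = a_{kj} (S_{kj} T)`, the
matrix `(a_{kj} T)` is a left and right multiplier with bound `D ‖T‖`.

Lower bound. A scalar matrix `b` is inflated to `(b_{kj} e ⊗ e)` (or `(b_{kj} e ⊗ T e)`),
multiplied by `(a_{kj} T)`, and compressed back along `T e` and `e` (or `e` and `e`). The result is
`‖T e‖² ‖e‖² (a_{kj} b_{kj})`, so a multiplier bound `C` of `(a_{kj} T)` makes `C ‖e‖ / ‖T e‖` a
Schur multiplier bound of `a` whenever `T e ≠ 0`; hence `‖a‖_{M(ℓ²)} ‖T‖ ≤ C`.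
-/

open scoped InnerProductSpace ENNReal Pointwise

lemma summable_of_norm_sum_le {ι F G : Type*} [NormedAddCommGroup F] [CompleteSpace F]
    [NormedAddCommGroup G] {u : ι → F} {v : ι → G} (hv : Summable v) {M : ℝ} (hM : 0 ≤ M)
    (h : ∀ t : Finset ι, ‖∑ i ∈ t, u i‖ ≤ M * ‖∑ i ∈ t, v i‖) : Summable u := by
  rw [summable_iff_vanishing_norm]
  intro ε hε
  obtain ⟨s, hs⟩ := hv.vanishing (Metric.ball_mem_nhds 0 (show 0 < ε / (M + 1) by positivity))
  refine ⟨s, fun t ht => (h t).trans_lt ?_⟩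
  have hvt : ‖∑ i ∈ t, v i‖ < ε / (M + 1) := mem_ball_zero_iff.mp (hs t ht)
  calc M * ‖∑ i ∈ t, v i‖ ≤ M * (ε / (M + 1)) := by gcongr
    _ < ε := by rw [mul_div_assoc', div_lt_iff₀ (by positivity)]; nlinarith

lemma ContinuousLinearMap.norm_comp_comp_le {𝕜 E₁ E₂ E₃ E₄ : Type*} [NontriviallyNormedField 𝕜]
    [NormedAddCommGroup E₁] [NormedSpace 𝕜 E₁] [NormedAddCommGroup E₂] [NormedSpace 𝕜 E₂]
    [NormedAddCommGroup E₃] [NormedSpace 𝕜 E₃] [NormedAddCommGroup E₄] [NormedSpace 𝕜 E₄]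
    (X : E₃ →L[𝕜] E₄) (Y : E₂ →L[𝕜] E₃) (Z : E₁ →L[𝕜] E₂) :
    ‖X ∘L Y ∘L Z‖ ≤ ‖X‖ * ‖Y‖ * ‖Z‖ :=
  (X.opNorm_comp_le _).trans <| by
    rw [mul_assoc]; gcongr; exact Y.opNorm_comp_le Z

lemma lp.norm_sum_single_sq {α E : Type*} [DecidableEq α] [NormedAddCommGroup E]
    (f : α → E) (s : Finset α) :
    ‖∑ i ∈ s, lp.single 2 i (f i)‖ ^ 2 = ∑ i ∈ s, ‖f i‖ ^ 2 := by
  simpa using lp.norm_sum_single (p := 2) (by norm_num) f s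

lemma norm_inv_norm_smul_le_one {𝕜 E : Type*} [RCLike 𝕜] [NormedAddCommGroup E]
    [NormedSpace 𝕜 E] (x : E) : ‖(‖x‖ : 𝕜)⁻¹ • x‖ ≤ 1 := by
  rcases eq_or_ne x 0 with rfl | hx
  · simp
  · exact (norm_smul_inv_norm hx).le

lemma inner_apply_eq_norm_mul_norm_mul {E : Type*} [NormedAddCommGroup E]
    [InnerProductSpace ℂ E] (S : E →L[ℂ] E) (x y : E) :
    ⟪x, S y⟫_ℂ = ‖x‖ * ‖y‖ * ⟪(‖x‖ : ℂ)⁻¹ • x, S ((‖y‖ : ℂ)⁻¹ • y)⟫_ℂ := by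
  rcases eq_or_ne x 0 with rfl | hx
  · simp
  rcases eq_or_ne y 0 with rfl | hy
  · simp
  have hx' : (‖x‖ : ℂ) ≠ 0 := by simpa using hx
  have hy' : (‖y‖ : ℂ) ≠ 0 := by simpa using hy
  rw [map_smul, inner_smul_left, inner_smul_right, map_inv₀, Complex.conj_ofReal]
  field_simp

lemma Real.sInf_eq_sInf_mul {s t : Set ℝ} {c : ℝ} (hc : 0 ≤ c) (hs : s.Nonempty)
    (ht : BddBelow t) (hst : ∀ x ∈ s, x * c ∈ t) (hts : ∀ y ∈ t, sInf s * c ≤ y) :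
    sInf t = sInf s * c := by
  obtain ⟨x, hx⟩ := hs
  refine le_antisymm ?_ (le_csInf ⟨x * c, hst x hx⟩ hts)
  calc sInf t ≤ sInf (c • s) := csInf_le_csInf ht (Set.Nonempty.smul_set ⟨x, hx⟩) ?_
    _ = sInf s * c := by rw [Real.sInf_smul_of_nonneg hc, smul_eq_mul, mul_comm]
  rintro _ ⟨x, hx, rfl⟩
  simpa [mul_comm] using hst x hx

section Diagonal

variable {𝕜 E F : Type*} [RCLike 𝕜] [NormedAddCommGroup E] [NormedSpace 𝕜 E]
  [NormedAddCommGroup F] [NormedSpace 𝕜 F] {p : ℝ≥0∞}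

lemma norm_apply_le_norm_smul_apply {T : ℕ → E →L[𝕜] F} {M : ℝ} (hM : ∀ i, ‖T i‖ ≤ M)
    (f : lp (fun _ : ℕ => E) p) (i : ℕ) : ‖T i (f i)‖ ≤ ‖((M : 𝕜) • f) i‖ := by
  rw [lp.coeFn_smul, Pi.smul_apply, norm_smul, RCLike.norm_ofReal,
    abs_of_nonneg ((norm_nonneg _).trans (hM i))]
  exact (T i).le_of_opNorm_le (hM i) _

variable [Fact (1 ≤ p)]

def lpDiagonal (T : ℕ → E →L[𝕜] F) {M : ℝ} (hM : ∀ i, ‖T i‖ ≤ M) :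
    lp (fun _ : ℕ => E) p →L[𝕜] lp (fun _ : ℕ => F) p :=
  LinearMap.mkContinuous
    { toFun f := ⟨fun i => T i (f i),
        ((M : 𝕜) • f).prop.mono' (norm_apply_le_norm_smul_apply hM f)⟩
      map_add' f g := by ext i; exact map_add (T i) (f i) (g i)
      map_smul' c f := by ext i; exact map_smul (T i) c (f i) }
    M fun f => calc
      _ ≤ ‖(M : 𝕜) • f‖ := lp.norm_mono (zero_lt_one.trans_le Fact.out).ne'
            (norm_apply_le_norm_smul_apply hM f)
      _ = M * ‖f‖ := by
        rw [norm_smul, RCLike.norm_ofReal, abs_of_nonneg ((norm_nonneg _).trans (hM 0))]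

@[simp] lemma lpDiagonal_apply (T : ℕ → E →L[𝕜] F) {M : ℝ} (hM : ∀ i, ‖T i‖ ≤ M)
    (f : lp (fun _ : ℕ => E) p) (i : ℕ) : lpDiagonal T hM f i = T i (f i) := rfl

lemma lpDiagonal_single (T : ℕ → E →L[𝕜] F) {M : ℝ} (hM : ∀ i, ‖T i‖ ≤ M) (j : ℕ) (x : E) :
    lpDiagonal (p := p) T hM (lp.single p j x) = lp.single p j (T j x) := by
  ext i
  rcases eq_or_ne i j with rfl | hij <;> simp [lp.single_apply, *]

lemma norm_lpDiagonal_le (T : ℕ → E →L[𝕜] F) {M : ℝ} (hM : ∀ i, ‖T i‖ ≤ M) :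
    ‖lpDiagonal (p := p) T hM‖ ≤ M :=
  LinearMap.mkContinuous_norm_le _ ((norm_nonneg _).trans (hM 0)) _

end Diagonal

section Sections

variable {α : Type*} [DecidableEq α] {E : Type*} [NormedAddCommGroup E] {p : ℝ≥0∞}

lemma memℓp_of_forall_norm_sum_single_le (hp : 0 < p.toReal) {f : α → E} {C : ℝ}
    (h : ∀ s : Finset α, ‖∑ i ∈ s, lp.single p i (f i)‖ ≤ C) : Memℓp f p := by
  refine memℓp_gen' (C := C ^ p.toReal) fun s => ?_
  rw [← lp.norm_sum_single hp]
  exact Real.rpow_le_rpow (lp.norm_nonneg' _) (h s) hp.le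

lemma lp.norm_le_of_forall_norm_sum_single_le (hp : 0 < p.toReal) {f : lp (fun _ : α => E) p}
    {C : ℝ} (hC : 0 ≤ C) (h : ∀ s : Finset α, ‖∑ i ∈ s, lp.single p i (f i)‖ ≤ C) :
    ‖f‖ ≤ C := by
  refine lp.norm_le_of_forall_sum_le hp hC fun s => ?_
  rw [← lp.norm_sum_single hp]
  exact Real.rpow_le_rpow (lp.norm_nonneg' _) (h s) hp.le

end Sections

section Assembly

variable {𝕜 E F : Type*} [RCLike 𝕜] [NormedAddCommGroup E] [NormedSpace 𝕜 E]
  [NormedAddCommGroup F] [NormedSpace 𝕜 F] [CompleteSpace F] {p : ℝ≥0∞} [Fact (1 ≤ p)]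

theorem lp.exists_clm_of_forall_finset_le (hp : p ≠ ∞) (R : ℕ → ℕ → (E →L[𝕜] F)) {M : ℝ}
    (hM : 0 ≤ M)
    (h : ∀ (x : ℕ → E) (t : Finset ℕ), ∃ g : lp (fun _ : ℕ => F) p,
      (∀ k, g k = ∑ j ∈ t, R k j (x j)) ∧ ‖g‖ ≤ M * ‖∑ j ∈ t, lp.single p j (x j)‖) :
    ∃ L : lp (fun _ : ℕ => E) p →L[𝕜] lp (fun _ : ℕ => F) p,
      (∀ j x k, L (lp.single p j x) k = R k j x) ∧ ‖L‖ ≤ M := by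
  choose col hcol using fun j (x : E) => h (fun _ => x) {j}
  have col_apply (j : ℕ) (x : E) (k : ℕ) : col j x k = R k j x := by
    simpa using (hcol j x).1 k
  have col_add (j : ℕ) (x y : E) : col j (x + y) = col j x + col j y := by
    ext k; simp [col_apply]
  have col_smul (j : ℕ) (c : 𝕜) (x : E) : col j (c • x) = c • col j x := by
    ext k; simp [col_apply]
  have norm_sum_col (f : ℕ → E) (t : Finset ℕ) :
      ‖∑ j ∈ t, col j (f j)‖ ≤ M * ‖∑ j ∈ t, lp.single p j (f j)‖ := by
    obtain ⟨g, hg, hgM⟩ := h f t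
    convert hgM using 2
    ext k
    rw [hg, lp.coeFn_sum, Finset.sum_apply]
    exact Finset.sum_congr rfl fun j _ => col_apply j (f j) k
  have hasSum_col (f : lp (fun _ : ℕ => E) p) :
      HasSum (fun j => col j (f j)) (∑' j, col j (f j)) :=
    (summable_of_norm_sum_le (lp.hasSum_single hp f).summable hM (norm_sum_col f)).hasSum
  let L : lp (fun _ : ℕ => E) p →ₗ[𝕜] lp (fun _ : ℕ => F) p :=
    { toFun f := ∑' j, col j (f j)
      map_add' f g := by
        refine (hasSum_col (f + g)).unique ?_
        simpa [col_add] using (hasSum_col f).add (hasSum_col g)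
      map_smul' c f := by
        refine (hasSum_col (c • f)).unique ?_
        simpa [col_smul] using (hasSum_col f).const_smul c }
  refine ⟨L.mkContinuous M fun f => ?_, fun j x k => ?_, L.mkContinuous_norm_le hM _⟩
  · exact le_of_tendsto_of_tendsto' (hasSum_col f).norm
      ((lp.hasSum_single hp f).norm.const_mul M) (norm_sum_col f)
  · let xj : lp (fun _ : ℕ => E) p := lp.single p j x
    have hsingle : HasSum (fun i => col i (xj i)) (col j x) := by
      convert hasSum_single (f := fun i => col i (xj i)) j fun i hi => ?_
      · simp [xj]
      · simpa [xj, Pi.single_apply, hi] using col_smul i 0 0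
    simp only [LinearMap.mkContinuous_apply]
    rw [show L (lp.single p j x) = col j x from (hasSum_col _).unique hsingle, col_apply]

end Assembly

section Compression

variable {E : Type} [NormedAddCommGroup E] [InnerProductSpace ℂ E]

lemma Represents.exists_representsC_inner {S : ℕ → ℕ → (E →L[ℂ] E)}
    {B : ellTwo E →L[ℂ] ellTwo E} (hB : Represents S B) (η ξ : ℕ → E) {Cη Cξ : ℝ}
    (hη : ∀ k, ‖η k‖ ≤ Cη) (hξ : ∀ j, ‖ξ j‖ ≤ Cξ) :
    ∃ Bt : ellTwo ℂ →L[ℂ] ellTwo ℂ,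
      RepresentsC (fun k j => ⟪η k, S k j (ξ j)⟫_ℂ) Bt ∧ ‖Bt‖ ≤ Cη * ‖B‖ * Cξ := by
  have hW : ∀ k, ‖innerSL ℂ (η k)‖ ≤ Cη := by simpa using hη
  have hV : ∀ j, ‖ContinuousLinearMap.toSpanSingleton ℂ (ξ j)‖ ≤ Cξ := by simpa using hξ
  refine ⟨lpDiagonal _ hW ∘L B ∘L lpDiagonal _ hV, fun j c k => ?_, ?_⟩
  · simp [lpDiagonal_single, hB j, mul_comm]
  · have hCη : 0 ≤ Cη := (norm_nonneg _).trans (hη 0)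
    refine (ContinuousLinearMap.norm_comp_comp_le _ _ _).trans ?_
    gcongr
    · exact norm_lpDiagonal_le _ _
    · exact norm_lpDiagonal_le _ _

lemma RepresentsC.exists_represents_smul_rankOne {b : ℕ → ℕ → ℂ}
    {B : ellTwo ℂ →L[ℂ] ellTwo ℂ} (hB : RepresentsC b B) (u w : E) :
    ∃ B' : ellTwo E →L[ℂ] ellTwo E,
      Represents (fun k j => b k j • InnerProductSpace.rankOne ℂ u w) B' ∧
        ‖B'‖ ≤ ‖u‖ * ‖B‖ * ‖w‖ := by
  have hU : ∀ _ : ℕ, ‖ContinuousLinearMap.toSpanSingleton ℂ u‖ ≤ ‖u‖ := by simp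
  have hW : ∀ _ : ℕ, ‖innerSL ℂ w‖ ≤ ‖w‖ := by simp
  refine ⟨lpDiagonal _ hU ∘L B ∘L lpDiagonal _ hW, fun j x k => ?_, ?_⟩
  · simp [lpDiagonal_single, hB j, smul_smul]
  · refine (ContinuousLinearMap.norm_comp_comp_le _ _ _).trans ?_
    gcongr
    · exact norm_lpDiagonal_le _ _
    · exact norm_lpDiagonal_le _ _

end Compression

section Amplification

variable {E : Type} [NormedAddCommGroup E] [InnerProductSpace ℂ E] {a : ℕ → ℕ → ℂ} {D : ℝ}
  {S : ℕ → ℕ → (E →L[ℂ] E)} {B : ellTwo E →L[ℂ] ellTwo E}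

theorem IsScalarMultBound.norm_sum_inner_le (hD0 : 0 ≤ D) (hD : IsScalarMultBound a D)
    (hB : Represents S B) (η ξ : ℕ → E) (K F : Finset ℕ) :
    ‖∑ k ∈ K, ∑ j ∈ F, a k j * ⟪η k, S k j (ξ j)⟫_ℂ‖ ≤
      D * ‖B‖ * ‖∑ k ∈ K, lp.single 2 k (η k)‖ * ‖∑ j ∈ F, lp.single 2 j (ξ j)‖ := by
  obtain ⟨Bt, hBt, hBtB⟩ := hB.exists_representsC_inner (fun k => (‖η k‖ : ℂ)⁻¹ • η k)
    (fun j => (‖ξ j‖ : ℂ)⁻¹ • ξ j) (fun k => norm_inv_norm_smul_le_one _)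
    (fun j => norm_inv_norm_smul_le_one _)
  obtain ⟨M, hM, hMBt⟩ := hD _ Bt hBt
  set u : ellTwo ℂ := ∑ k ∈ K, lp.single 2 k (‖η k‖ : ℂ)
  set w : ellTwo ℂ := ∑ j ∈ F, lp.single 2 j (‖ξ j‖ : ℂ)
  have hu : ‖u‖ = ‖∑ k ∈ K, lp.single 2 k (η k)‖ := by
    rw [← pow_left_inj₀ (norm_nonneg _) (norm_nonneg _) two_ne_zero, lp.norm_sum_single_sq,
      lp.norm_sum_single_sq]
    simp
  have hw : ‖w‖ = ‖∑ j ∈ F, lp.single 2 j (ξ j)‖ := by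
    rw [← pow_left_inj₀ (norm_nonneg _) (norm_nonneg _) two_ne_zero, lp.norm_sum_single_sq,
      lp.norm_sum_single_sq]
    simp
  have key : ⟪u, M w⟫_ℂ = ∑ k ∈ K, ∑ j ∈ F, a k j * ⟪η k, S k j (ξ j)⟫_ℂ := by
    simp only [u, w, sum_inner, map_sum, lp.inner_single_left, inner_sum]
    rw [Finset.sum_comm]
    refine Finset.sum_congr rfl fun k _ => Finset.sum_congr rfl fun j _ => ?_
    rw [hM, inner_apply_eq_norm_mul_norm_mul (S k j) (η k) (ξ j), RCLike.inner_apply,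
      Complex.conj_ofReal]
    ring
  calc ‖∑ k ∈ K, ∑ j ∈ F, a k j * ⟪η k, S k j (ξ j)⟫_ℂ‖ = ‖⟪u, M w⟫_ℂ‖ := by rw [key]
    _ ≤ ‖u‖ * (‖M‖ * ‖w‖) := (norm_inner_le_norm _ _).trans (by gcongr; exact M.le_opNorm w)
    _ ≤ ‖u‖ * (D * ‖B‖ * ‖w‖) := by
        gcongr
        exact hMBt.trans (by gcongr; simpa using hBtB)
    _ = _ := by rw [hu, hw]; ring

theorem IsScalarMultBound.exists_sum_apply_le (hD0 : 0 ≤ D) (hD : IsScalarMultBound a D)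
    (hB : Represents S B) (x : ℕ → E) (t : Finset ℕ) :
    ∃ g : ellTwo E, (∀ k, g k = ∑ j ∈ t, (a k j • S k j) (x j)) ∧
      ‖g‖ ≤ D * ‖B‖ * ‖∑ j ∈ t, lp.single 2 j (x j)‖ := by
  set g : ℕ → E := fun k => ∑ j ∈ t, (a k j • S k j) (x j)
  have hDB : 0 ≤ D * ‖B‖ * ‖∑ j ∈ t, lp.single 2 j (x j)‖ := by positivity
  have hg (K : Finset ℕ) :
      ‖∑ k ∈ K, lp.single 2 k (g k)‖ ≤ D * ‖B‖ * ‖∑ j ∈ t, lp.single 2 j (x j)‖ := by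
    have hdiag : ∑ k ∈ K, ∑ j ∈ t, a k j * ⟪g k, S k j (x j)⟫_ℂ =
        ((‖∑ k ∈ K, lp.single 2 k (g k)‖ ^ 2 : ℝ) : ℂ) := by
      rw [lp.norm_sum_single_sq]
      push_cast
      refine Finset.sum_congr rfl fun k _ => ?_
      refine Eq.trans ?_ (inner_self_eq_norm_sq_to_K (g k))
      conv_rhs => rw [inner_sum]
      simp only [FunLike.coe_smul, Pi.smul_apply, inner_smul_right]
    have := hD.norm_sum_inner_le hD0 hB g x K t
    rw [hdiag, Complex.norm_real, Real.norm_of_nonneg (by positivity)] at this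
    nlinarith [norm_nonneg (∑ k ∈ K, lp.single 2 k (g k))]
  have hp : 0 < (2 : ℝ≥0∞).toReal := by norm_num
  refine ⟨⟨g, memℓp_of_forall_norm_sum_single_le hp hg⟩, fun k => rfl, ?_⟩
  exact lp.norm_le_of_forall_norm_sum_single_le hp hDB hg

theorem IsScalarMultBound.exists_represents_smul [CompleteSpace E] (hD0 : 0 ≤ D)
    (hD : IsScalarMultBound a D) (hB : Represents S B) :
    ∃ AB : ellTwo E →L[ℂ] ellTwo E,
      Represents (fun k j => a k j • S k j) AB ∧ ‖AB‖ ≤ D * ‖B‖ :=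
  lp.exists_clm_of_forall_finset_le (by simp) _ (by positivity) (hD.exists_sum_apply_le hD0 hB)

end Amplification

section UpperBounds

variable {E : Type} [NormedAddCommGroup E] [InnerProductSpace ℂ E] {a : ℕ → ℕ → ℂ}

theorem IsScalarMultBound.isLeftMultBound [CompleteSpace E] {D : ℝ} (hD0 : 0 ≤ D)
    (hD : IsScalarMultBound a D) (T : E →L[ℂ] E) :
    IsLeftMultBound (fun k j => a k j • T) (D * ‖T‖) := by
  intro S B hB
  obtain ⟨AB, hAB, hABB⟩ := hD.exists_represents_smul hD0 hB
  have hT : ∀ _ : ℕ, ‖T‖ ≤ ‖T‖ := fun _ => le_rfl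
  let DT : ellTwo E →L[ℂ] ellTwo E := lpDiagonal _ hT
  refine ⟨DT ∘L AB, fun j x k => ?_, ?_⟩
  · change T (AB (lp.single 2 j x) k) = _
    rw [hAB j x k]
    simp
  · calc ‖DT ∘L AB‖ ≤ ‖T‖ * (D * ‖B‖) :=
          (DT.opNorm_comp_le AB).trans (mul_le_mul (norm_lpDiagonal_le _ hT) hABB
            (norm_nonneg _) (norm_nonneg _))
      _ = D * ‖T‖ * ‖B‖ := by ring

theorem IsScalarMultBound.isRightMultBound [CompleteSpace E] {D : ℝ} (hD0 : 0 ≤ D)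
    (hD : IsScalarMultBound a D) (T : E →L[ℂ] E) :
    IsRightMultBound (fun k j => a k j • T) (D * ‖T‖) := by
  intro S B hB
  have hT : ∀ _ : ℕ, ‖T‖ ≤ ‖T‖ := fun _ => le_rfl
  let DT : ellTwo E →L[ℂ] ellTwo E := lpDiagonal _ hT
  have hBT : Represents (fun k j => S k j ∘L T) (B ∘L DT) := fun j x k => by
    simp [DT, lpDiagonal_single, hB j]
  obtain ⟨AB, hAB, hABB⟩ := hD.exists_represents_smul hD0 hBT
  refine ⟨AB, fun j x k => ?_, ?_⟩
  · simp [hAB j x k]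
  · calc ‖AB‖ ≤ D * ‖B ∘L DT‖ := hABB
      _ ≤ D * (‖B‖ * ‖T‖) := by
        gcongr
        exact (B.opNorm_comp_le DT).trans (by gcongr; exact norm_lpDiagonal_le _ hT)
      _ = D * ‖T‖ * ‖B‖ := by ring

end UpperBounds

section Deamplification

variable {E : Type} [NormedAddCommGroup E] [InnerProductSpace ℂ E] {a : ℕ → ℕ → ℂ}
  {T : E →L[ℂ] E} {C : ℝ} {e : E}

lemma isScalarMultBound_of_forall_representsC_smul {K : ℝ} {c : ℂ} (hc : c ≠ 0)
    (h : ∀ (b : ℕ → ℕ → ℂ) (B : ellTwo ℂ →L[ℂ] ellTwo ℂ), RepresentsC b B →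
      ∃ M : ellTwo ℂ →L[ℂ] ellTwo ℂ,
        RepresentsC (fun k j => c * (a k j * b k j)) M ∧ ‖M‖ ≤ K * ‖B‖) :
    IsScalarMultBound a (K / ‖c‖) := by
  intro b B hB
  obtain ⟨M, hM, hMB⟩ := h b B hB
  refine ⟨c⁻¹ • M, fun j x k => ?_, ?_⟩
  · change c⁻¹ * M (lp.single 2 j x) k = _
    rw [hM j x k]
    field_simp
  · calc ‖c⁻¹ • M‖ ≤ ‖c‖⁻¹ * (K * ‖B‖) := by
          rw [norm_smul, norm_inv]; gcongr
      _ = K / ‖c‖ * ‖B‖ := by ring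

lemma isScalarMultBound_of_forall_representsC_inner_self_mul (he : T e ≠ 0)
    (h : ∀ (b : ℕ → ℕ → ℂ) (B : ellTwo ℂ →L[ℂ] ellTwo ℂ), RepresentsC b B →
      ∃ M : ellTwo ℂ →L[ℂ] ellTwo ℂ,
        RepresentsC (fun k j => ⟪T e, T e⟫_ℂ * ⟪e, e⟫_ℂ * (a k j * b k j)) M ∧
          ‖M‖ ≤ C * ‖e‖ ^ 3 * ‖T e‖ * ‖B‖) :
    IsScalarMultBound a (C * ‖e‖ / ‖T e‖) := by
  have he' : e ≠ 0 := ne_zero_of_map he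
  convert isScalarMultBound_of_forall_representsC_smul
    (mul_ne_zero (inner_self_ne_zero.2 he) (inner_self_ne_zero.2 he')) h using 1
  simp only [norm_mul, inner_self_eq_norm_sq_to_K, norm_pow, RCLike.norm_ofReal, abs_norm]
  field_simp [norm_ne_zero_iff.mpr he, norm_ne_zero_iff.mpr he']

theorem IsLeftMultBound.isScalarMultBound (hC0 : 0 ≤ C)
    (hC : IsLeftMultBound (fun k j => a k j • T) C) (he : T e ≠ 0) :
    IsScalarMultBound a (C * ‖e‖ / ‖T e‖) := by
  refine isScalarMultBound_of_forall_representsC_inner_self_mul he fun b B hB => ?_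
  obtain ⟨B', hB', hB'B⟩ := hB.exists_represents_smul_rankOne e e
  obtain ⟨AB, hAB, hABB'⟩ := hC _ B' hB'
  obtain ⟨M, hM, hMAB⟩ := hAB.exists_representsC_inner (fun _ => T e) (fun _ => e)
    (fun _ => le_rfl) (fun _ => le_rfl)
  refine ⟨M, fun j x k => ?_, ?_⟩
  · rw [hM j x k]
    simp only [ContinuousLinearMap.comp_apply, FunLike.coe_smul, Pi.smul_apply,
      InnerProductSpace.rankOne_apply, map_smul, inner_smul_right]
    ring
  · calc ‖M‖ ≤ ‖T e‖ * (C * (‖e‖ * ‖B‖ * ‖e‖)) * ‖e‖ := by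
          refine hMAB.trans ?_
          gcongr
          exact hABB'.trans (by gcongr)
      _ = C * ‖e‖ ^ 3 * ‖T e‖ * ‖B‖ := by ring

theorem IsRightMultBound.isScalarMultBound (hC0 : 0 ≤ C)
    (hC : IsRightMultBound (fun k j => a k j • T) C) (he : T e ≠ 0) :
    IsScalarMultBound a (C * ‖e‖ / ‖T e‖) := by
  refine isScalarMultBound_of_forall_representsC_inner_self_mul he fun b B hB => ?_
  obtain ⟨B', hB', hB'B⟩ := hB.exists_represents_smul_rankOne e (T e)
  obtain ⟨AB, hAB, hABB'⟩ := hC _ B' hB'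
  obtain ⟨M, hM, hMAB⟩ := hAB.exists_representsC_inner (fun _ => e) (fun _ => e)
    (fun _ => le_rfl) (fun _ => le_rfl)
  refine ⟨M, fun j x k => ?_, ?_⟩
  · rw [hM j x k]
    simp only [ContinuousLinearMap.comp_apply, FunLike.coe_smul, Pi.smul_apply,
      InnerProductSpace.rankOne_apply, map_smul, inner_smul_right]
    ring
  · calc ‖M‖ ≤ ‖e‖ * (C * (‖e‖ * ‖B‖ * ‖T e‖)) * ‖e‖ := by
          refine hMAB.trans ?_
          gcongr
          exact hABB'.trans (by gcongr)
      _ = C * ‖e‖ ^ 3 * ‖T e‖ * ‖B‖ := by ring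

lemma scalarMultNorm_mul_norm_le (hC0 : 0 ≤ C)
    (h : ∀ e, T e ≠ 0 → IsScalarMultBound a (C * ‖e‖ / ‖T e‖)) :
    scalarMultNorm a * ‖T‖ ≤ C := by
  have hN0 : 0 ≤ scalarMultNorm a := Real.sInf_nonneg fun _ hD => hD.1
  have hNT (e : E) : ‖(scalarMultNorm a : ℂ) • T e‖ ≤ C * ‖e‖ := by
    rw [norm_smul, Complex.norm_real, Real.norm_of_nonneg hN0]
    rcases eq_or_ne (T e) 0 with he | he
    · simp [he]; positivity
    have hN : scalarMultNorm a ≤ C * ‖e‖ / ‖T e‖ :=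
      csInf_le ⟨0, fun _ hD => hD.1⟩ ⟨by positivity, h e he⟩
    rwa [le_div_iff₀ (norm_pos_iff.mpr he)] at hN
  calc scalarMultNorm a * ‖T‖ = ‖(scalarMultNorm a : ℂ) • T‖ := by
        rw [norm_smul, Complex.norm_real, Real.norm_of_nonneg hN0]
    _ ≤ C := ContinuousLinearMap.opNorm_le_bound _ hC0 hNT

end Deamplification

/-- if `a = (a_{kj})` is a scalar Schur multiplier and `T ∈ B(H)`, then
`(a_{kj} T)` is a left and right Schur multiplier on `B(ℓ²(H))`, with both multiplier
norms equal to `‖a‖_{M(ℓ²)} ‖T‖`. -/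
theorem scalar_tensor_multiplier (a : ℕ → ℕ → ℂ)
    (h : ∃ C : ℝ, 0 ≤ C ∧ IsScalarMultBound a C) (T : H →L[ℂ] H) :
    (∃ C : ℝ, 0 ≤ C ∧ IsLeftMultBound (fun k j => a k j • T) C) ∧
    (∃ C : ℝ, 0 ≤ C ∧ IsRightMultBound (fun k j => a k j • T) C) ∧
    leftMultNorm (fun k j => a k j • T) = scalarMultNorm a * ‖T‖ ∧
    rightMultNorm (fun k j => a k j • T) = scalarMultNorm a * ‖T‖ := by
  obtain ⟨D, hD0, hD⟩ := h
  have hbdd (P : ℝ → Prop) : BddBelow {C : ℝ | 0 ≤ C ∧ P C} := ⟨0, fun _ hC => hC.1⟩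
  refine ⟨⟨_, by positivity, hD.isLeftMultBound hD0 T⟩,
    ⟨_, by positivity, hD.isRightMultBound hD0 T⟩, ?_, ?_⟩
  · refine Real.sInf_eq_sInf_mul (norm_nonneg T) ⟨D, hD0, hD⟩ (hbdd _)
      (fun D' hD' => ⟨mul_nonneg hD'.1 (norm_nonneg T), hD'.2.isLeftMultBound hD'.1 T⟩)
      fun C hC => scalarMultNorm_mul_norm_le hC.1 fun e he => hC.2.isScalarMultBound hC.1 he
  · refine Real.sInf_eq_sInf_mul (norm_nonneg T) ⟨D, hD0, hD⟩ (hbdd _)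
      (fun D' hD' => ⟨mul_nonneg hD'.1 (norm_nonneg T), hD'.2.isRightMultBound hD'.1 T⟩)
      fun C hC => scalarMultNorm_mul_norm_le hC.1 fun e he => hC.2.isScalarMultBound hC.1 he
end
end

section
/- Let A = (T_{kj}) be the matrix with T_{k,2k} = Id_H for all k and T_{kj} = 0 otherwise. Then A ∈ B(ℓ²(H)), but the function t ↦ f_A(t) = (e^{i(j−k)t} T_{kj}) is not strongly measurable as a B(ℓ²(H))-valued function; in fact ‖f_A(t) − f_A(s)‖_{B(ℓ²(H))} = sup_{k∈ℕ} |e^{ik(t−s)} − 1| ≥ √2 whenever t ≠ s, so the range {f_A(t) : t} is non-separable. -/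
/-!
For `t ≠ s` the operator `f_A(t) - f_A(s)` sends `x` to `((e^{ikt} - e^{iks}) x_{2k})_k`, and the
norm of such a weighted composition with an injective index map is the supremum of the weights.
When `0 < |t - s| < 2π`, some multiple `k (t - s)` has nonpositive cosine, and then
`|e^{ik(t-s)} - 1| ≥ √2`. So `f_A` maps the uncountable interval `[-π, π)` injectively onto a
`√2`-separated set, which is not separable; by Pettis' theorem `f_A` is not strongly measurable.
-/

noncomputable section

variable {H : Type} [NormedAddCommGroup H] [InnerProductSpace ℂ H] [CompleteSpace H]
  [TopologicalSpace.SeparableSpace H]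

/-- The matrix of `f_A(t) = M_t * A`, i.e. `(e^{i(j−k)t} T_{kj})`. -/
def fAMat (T : ℕ → ℕ → (H →L[ℂ] H)) (t : ℝ) : ℕ → ℕ → (H →L[ℂ] H) :=
  fun k j => Complex.exp (Complex.I * (((j : ℤ) - (k : ℤ)) : ℤ) * t) • T k j

/-- The matrix with `T_{k,2k} = Id` and all other entries zero. -/
def shiftMat (H : Type) [NormedAddCommGroup H] [InnerProductSpace ℂ H] :
    ℕ → ℕ → (H →L[ℂ] H) :=
  fun k j => if j = 2 * k then ContinuousLinearMap.id ℂ H else 0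

open scoped ENNReal Real
open Complex (I exp)

theorem Memℓp.comp_injective {ι κ E : Type*} [NormedAddCommGroup E] {p : ℝ≥0∞}
    {f : κ → E} (hf : Memℓp f p) (hp : 0 < p.toReal) {σ : ι → κ} (hσ : σ.Injective) :
    Memℓp (f ∘ σ) p :=
  memℓp_gen (((memℓp_gen_iff hp).1 hf).comp_injective hσ)

namespace lp

variable {ι κ 𝕜 E F : Type*} [NormedAddCommGroup E] [NormedAddCommGroup F] {p : ℝ≥0∞}

theorem norm_le_mul_of_norm_apply_le (hp : 0 < p.toReal) {σ : ι → κ} (hσ : σ.Injective)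
    {C : ℝ} (hC : 0 ≤ C) {x : lp (fun _ : κ => E) p} {y : lp (fun _ : ι => F) p}
    (h : ∀ i, ‖y i‖ ≤ C * ‖x (σ i)‖) : ‖y‖ ≤ C * ‖x‖ := by
  have hx := (memℓp_gen_iff hp).1 (lp.memℓp x)
  rw [← Real.rpow_le_rpow_iff (norm_nonneg' y) (mul_nonneg hC (norm_nonneg' x)) hp,
    Real.mul_rpow hC (norm_nonneg' x),
    norm_rpow_eq_tsum hp, norm_rpow_eq_tsum hp, ← tsum_mul_left]
  calc ∑' i, ‖y i‖ ^ p.toReal ≤ ∑' i, C ^ p.toReal * ‖x (σ i)‖ ^ p.toReal := by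
        refine ((memℓp_gen_iff hp).1 (lp.memℓp y)).tsum_le_tsum (fun i => ?_)
          ((hx.comp_injective hσ).mul_left _)
        rw [← Real.mul_rpow hC (norm_nonneg _)]
        exact Real.rpow_le_rpow (norm_nonneg _) (h i) hp.le
    _ ≤ ∑' j, C ^ p.toReal * ‖x j‖ ^ p.toReal :=
        tsum_comp_le_tsum_of_inj (hx.mul_left _) (fun _ => by positivity) hσ

variable [NontriviallyNormedField 𝕜] [NormedSpace 𝕜 E] [NormedSpace 𝕜 F] [Fact (1 ≤ p)]

variable (𝕜 E) in
def compCLM (hp : p ≠ ∞) {σ : ι → κ} (hσ : σ.Injective) :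
    lp (fun _ : κ => E) p →L[𝕜] lp (fun _ : ι => E) p :=
  have hp' : 0 < p.toReal := ENNReal.toReal_pos (zero_lt_one.trans_le Fact.out).ne' hp
  LinearMap.mkContinuous
    { toFun := fun x => ⟨x ∘ σ, (lp.memℓp x).comp_injective hp' hσ⟩
      map_add' := fun _ _ => rfl
      map_smul' := fun _ _ => rfl }
    1 fun _ => norm_le_mul_of_norm_apply_le hp' hσ zero_le_one fun _ => (one_mul _).ge

@[simp]
theorem compCLM_apply (hp : p ≠ ∞) {σ : ι → κ} (hσ : σ.Injective)
    (x : lp (fun _ : κ => E) p) (i : ι) : compCLM 𝕜 E hp hσ x i = x (σ i) :=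
  rfl

theorem norm_le_opNorm_of_apply_eq_smul [Nontrivial E]
    {A : lp (fun _ : κ => E) p →L[𝕜] lp (fun _ : ι => E) p} {σ : ι → κ} {c : ι → 𝕜}
    (hA : ∀ x i, A x i = c i • x (σ i)) (i : ι) : ‖c i‖ ≤ ‖A‖ := by
  classical
  obtain ⟨v, hv⟩ := exists_ne (0 : E)
  have hp : p ≠ 0 := (zero_lt_one.trans_le Fact.out).ne'
  let e : lp (fun _ : κ => E) p := lp.single p (σ i) v
  refine le_of_mul_le_mul_right ?_ (norm_pos_iff.2 hv)
  calc ‖c i‖ * ‖v‖ = ‖A e i‖ := by rw [hA, lp.single_apply_self, norm_smul]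
    _ ≤ ‖A e‖ := norm_apply_le_norm hp _ i
    _ ≤ ‖A‖ * ‖e‖ := A.le_opNorm e
    _ = ‖A‖ * ‖v‖ := by rw [lp.norm_single (pos_iff_ne_zero.2 hp)]

theorem opNorm_eq_iSup_of_apply_eq_smul [Nontrivial E] (hp : p ≠ ∞)
    {A : lp (fun _ : κ => E) p →L[𝕜] lp (fun _ : ι => E) p} {σ : ι → κ} (hσ : σ.Injective)
    {c : ι → 𝕜} (hA : ∀ x i, A x i = c i • x (σ i)) : ‖A‖ = ⨆ i, ‖c i‖ := by
  have hp' : 0 < p.toReal := ENNReal.toReal_pos (zero_lt_one.trans_le Fact.out).ne' hp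
  have hbdd : BddAbove (Set.range fun i => ‖c i‖) :=
    ⟨‖A‖, Set.forall_mem_range.2 (norm_le_opNorm_of_apply_eq_smul hA)⟩
  have hsup : 0 ≤ ⨆ i, ‖c i‖ := Real.iSup_nonneg fun _ => norm_nonneg _
  refine le_antisymm (A.opNorm_le_bound hsup fun x => ?_)
    (Real.iSup_le (norm_le_opNorm_of_apply_eq_smul hA) (norm_nonneg _))
  refine norm_le_mul_of_norm_apply_le hp' hσ hsup fun i => ?_
  rw [hA, norm_smul]
  gcongr
  exact le_ciSup hbdd i

variable [DecidableEq κ]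

theorem hasSum_apply_single (hp : p ≠ ∞) (A : lp (fun _ : κ => E) p →L[𝕜] lp (fun _ : ι => F) p)
    (x : lp (fun _ : κ => E) p) (i : ι) :
    HasSum (fun j => A (lp.single p j (x j)) i) (A x i) :=
  (evalCLM 𝕜 _ p i ∘L A).hasSum (lp.hasSum_single hp x)

theorem apply_eq_smul_of_apply_single (hp : p ≠ ∞)
    {A : lp (fun _ : κ => E) p →L[𝕜] lp (fun _ : ι => E) p} {σ : ι → κ} {c : ι → 𝕜}
    (hA : ∀ j v i, A (lp.single p j v) i = if j = σ i then c i • v else 0)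
    (x : lp (fun _ : κ => E) p) (i : ι) : A x i = c i • x (σ i) := by
  refine (hasSum_apply_single hp A x i).unique ?_
  convert hasSum_single (σ i) fun j hj => ?_ using 1 <;> simp_all

end lp

theorem TopologicalSpace.IsSeparable.countable_of_pairwise_le_dist {X : Type*}
    [PseudoMetricSpace X] {s : Set X} (hs : IsSeparable s) {ε : ℝ} (hε : 0 < ε)
    (hsep : s.Pairwise fun x y => ε ≤ dist x y) : s.Countable := by
  obtain ⟨t, hts, htc, hst⟩ := hs.exists_countable_dense_subset
  refine htc.mono fun x hx => ?_
  obtain ⟨y, hyt, hxy⟩ := Metric.mem_closure_iff.1 (hst hx) ε hε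
  by_contra hxt
  exact (hsep hx (hts hyt) (by rintro rfl; exact hxt hyt)).not_gt hxy

theorem not_isSeparable_image_of_le_dist {α X : Type*} [PseudoMetricSpace X] {f : α → X}
    {s : Set α} (hs : ¬ s.Countable) {ε : ℝ} (hε : 0 < ε)
    (hf : ∀ a ∈ s, ∀ b ∈ s, a ≠ b → ε ≤ dist (f a) (f b)) :
    ¬ TopologicalSpace.IsSeparable (f '' s) := by
  have hinj : s.InjOn f := fun a ha b hb hab => by
    by_contra hne
    exact (hf a ha b hb hne).not_gt (by rw [hab, dist_self]; exact hε)
  refine fun hsep => hs (Set.countable_of_injective_of_countable_image hinj ?_)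
  refine hsep.countable_of_pairwise_le_dist hε ?_
  rintro _ ⟨a, ha, rfl⟩ _ ⟨b, hb, rfl⟩ hab
  exact hf a ha b hb (ne_of_apply_ne f hab)

theorem norm_exp_I_mul_sub_exp_I_mul (t s : ℝ) :
    ‖exp (I * t) - exp (I * s)‖ = ‖exp (I * (t - s : ℝ)) - 1‖ := by
  rw [show exp (I * t) = exp (I * s) * exp (I * (t - s : ℝ)) by
      rw [← Complex.exp_add]; push_cast; ring_nf,
    ← mul_sub_one, norm_mul, Complex.norm_exp_I_mul_ofReal, one_mul]

theorem sqrt_two_le_norm_exp_I_mul_sub_one {x : ℝ} (hx : Real.cos x ≤ 0) :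
    √2 ≤ ‖exp (I * x) - 1‖ := by
  rw [Complex.norm_exp_I_mul_ofReal_sub_one, Real.sqrt_le_iff, Real.norm_eq_abs, sq_abs]
  refine ⟨abs_nonneg _, ?_⟩
  have hcos := Real.cos_two_mul_eq_one_sub (x / 2)
  rw [mul_div_cancel₀ x two_ne_zero] at hcos
  linarith

theorem Real.exists_nat_cos_mul_nonpos_of_mem_Ioc {φ : ℝ} (hφ : φ ∈ Set.Ioc 0 π) :
    ∃ k : ℕ, Real.cos (k * φ) ≤ 0 := by
  obtain ⟨hφ0, hφπ⟩ := hφ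
  refine ⟨⌈π / 2 / φ⌉₊, Real.cos_nonpos_of_pi_div_two_le_of_le ?_ ?_⟩
  · exact (div_le_iff₀ hφ0).1 (Nat.le_ceil _)
  · have hk := Nat.ceil_lt_add_one (div_nonneg Real.pi_div_two_pos.le hφ0.le)
    calc ⌈π / 2 / φ⌉₊ * φ ≤ (π / 2 / φ + 1) * φ := by gcongr
      _ = π / 2 + φ := by field_simp
      _ ≤ π + π / 2 := by linarith

theorem Real.exists_nat_cos_mul_nonpos {θ : ℝ} (h0 : θ ≠ 0) (h2π : |θ| < 2 * π) :
    ∃ k : ℕ, Real.cos (k * θ) ≤ 0 := by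
  have hcos_abs (k : ℕ) : Real.cos (k * |θ|) = Real.cos (k * θ) := by
    rcases abs_choice θ with h | h <;> simp [h]
  rcases le_or_gt |θ| π with hπ | hπ
  · obtain ⟨k, hk⟩ := exists_nat_cos_mul_nonpos_of_mem_Ioc ⟨abs_pos.2 h0, hπ⟩
    exact ⟨k, hcos_abs k ▸ hk⟩
  · obtain ⟨k, hk⟩ := exists_nat_cos_mul_nonpos_of_mem_Ioc
      (φ := 2 * π - |θ|) ⟨by linarith, by linarith⟩
    refine ⟨k, ?_⟩
    rwa [← hcos_abs, ← Real.cos_nat_mul_two_pi_sub (k * |θ|) k, ← mul_sub]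

section ShiftMatrix

omit [CompleteSpace H] [TopologicalSpace.SeparableSpace H]

theorem shiftMat_apply (k j : ℕ) (v : H) : shiftMat H k j v = if j = 2 * k then v else 0 := by
  unfold shiftMat; split_ifs <;> rfl

theorem fAMat_shiftMat_apply (t : ℝ) (k j : ℕ) (v : H) :
    fAMat (shiftMat H) t k j v = if j = 2 * k then exp (I * k * t) • v else 0 := by
  rw [fAMat, smul_apply, shiftMat_apply]
  split_ifs with h
  · subst h; push_cast; ring_nf
  · exact smul_zero _

def shiftOp : ellTwo H →L[ℂ] ellTwo H :=
  lp.compCLM ℂ H ENNReal.ofNat_ne_top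
    (mul_right_injective₀ two_ne_zero : (2 * · : ℕ → ℕ).Injective)

theorem shiftOp_represents : Represents (shiftMat H) (shiftOp (H := H)) := by
  intro j v k
  simp [shiftOp, shiftMat_apply, Pi.single_apply, eq_comm]

theorem apply_eq_smul_of_represents_fAMat {t : ℝ} {A : ellTwo H →L[ℂ] ellTwo H}
    (hA : Represents (fAMat (shiftMat H) t) A) (x : ellTwo H) (k : ℕ) :
    A x k = exp (I * k * t) • x (2 * k) :=
  lp.apply_eq_smul_of_apply_single ENNReal.ofNat_ne_top
    (fun j v k => (hA j v k).trans (fAMat_shiftMat_apply t k j v)) x k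

theorem sub_apply_eq_smul_of_represents_fAMat {t s : ℝ} {A B : ellTwo H →L[ℂ] ellTwo H}
    (hA : Represents (fAMat (shiftMat H) t) A) (hB : Represents (fAMat (shiftMat H) s) B)
    (x : ellTwo H) (k : ℕ) :
    (A - B) x k = (exp (I * k * t) - exp (I * k * s)) • x (2 * k) := by
  rw [sub_apply, lp.coeFn_sub, Pi.sub_apply,
    apply_eq_smul_of_represents_fAMat hA, apply_eq_smul_of_represents_fAMat hB, sub_smul]

theorem norm_exp_I_nat_mul_sub (k : ℕ) (t s : ℝ) :
    ‖exp (I * k * t) - exp (I * k * s)‖ = ‖exp (I * k * (t - s)) - 1‖ := by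
  simpa only [Complex.ofReal_mul, Complex.ofReal_natCast, Complex.ofReal_sub, mul_assoc, mul_sub]
    using norm_exp_I_mul_sub_exp_I_mul (k * t) (k * s)

theorem norm_sub_eq_iSup_of_represents_fAMat [Nontrivial H] {t s : ℝ}
    {A B : ellTwo H →L[ℂ] ellTwo H}
    (hA : Represents (fAMat (shiftMat H) t) A) (hB : Represents (fAMat (shiftMat H) s) B) :
    ‖A - B‖ = ⨆ k : ℕ, ‖exp (I * k * (t - s)) - 1‖ := by
  simp only [← norm_exp_I_nat_mul_sub]
  exact lp.opNorm_eq_iSup_of_apply_eq_smul ENNReal.ofNat_ne_top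
    (mul_right_injective₀ two_ne_zero) (sub_apply_eq_smul_of_represents_fAMat hA hB)

theorem sqrt_two_le_norm_sub_of_represents_fAMat [Nontrivial H] {t s : ℝ}
    {A B : ellTwo H →L[ℂ] ellTwo H}
    (hA : Represents (fAMat (shiftMat H) t) A) (hB : Represents (fAMat (shiftMat H) s) B)
    (hts : t ≠ s) (hlt : |t - s| < 2 * π) : √2 ≤ ‖A - B‖ := by
  obtain ⟨k, hk⟩ := Real.exists_nat_cos_mul_nonpos (sub_ne_zero.2 hts) hlt
  calc √2 ≤ ‖exp (I * (k * (t - s) : ℝ)) - 1‖ := sqrt_two_le_norm_exp_I_mul_sub_one hk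
    _ = ‖exp (I * k * t) - exp (I * k * s)‖ := by
        rw [norm_exp_I_nat_mul_sub]; push_cast; ring_nf
    _ ≤ ‖A - B‖ :=
        lp.norm_le_opNorm_of_apply_eq_smul (sub_apply_eq_smul_of_represents_fAMat hA hB) k

end ShiftMatrix

/-- the matrix with `T_{k,2k} = Id` (zero elsewhere) is bounded on `ℓ²(H)`,
yet `t ↦ f_A(t)` is not strongly measurable: for `t ≠ s` in `[-π,π)` one has
`‖f_A(t) − f_A(s)‖ = sup_k |e^{ik(t−s)} − 1| ≥ √2`, so its range is non-separable. -/
theorem shift_fA_not_stronglyMeasurable [Nontrivial H] :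
    (∃ A : ellTwo H →L[ℂ] ellTwo H, Represents (shiftMat H) A) ∧
    ∀ F : ℝ → (ellTwo H →L[ℂ] ellTwo H),
      (∀ t : ℝ, Represents (fAMat (shiftMat H) t) (F t)) →
      (∀ t s : ℝ, t ∈ Set.Ico (-Real.pi) Real.pi → s ∈ Set.Ico (-Real.pi) Real.pi →
        t ≠ s →
        ‖F t - F s‖ = (⨆ k : ℕ, ‖Complex.exp (Complex.I * k * (t - s)) - 1‖) ∧
        Real.sqrt 2 ≤ ‖F t - F s‖) ∧
      ¬ TopologicalSpace.IsSeparable (F '' Set.Ico (-Real.pi) Real.pi) ∧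
      ¬ MeasureTheory.StronglyMeasurable F := by
  refine ⟨⟨shiftOp, shiftOp_represents⟩, fun F hF => ?_⟩
  have hgap : ∀ t ∈ Set.Ico (-π) π, ∀ s ∈ Set.Ico (-π) π, t ≠ s → √2 ≤ ‖F t - F s‖ :=
    fun t ht s hs hts => sqrt_two_le_norm_sub_of_represents_fAMat (hF t) (hF s) hts
      (abs_sub_lt_iff.2 ⟨by linarith [ht.2, hs.1], by linarith [hs.2, ht.1]⟩)
  have huncount : ¬ (Set.Ico (-π) π).Countable := by
    rw [Cardinal.Real.Ico_countable_iff]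
    linarith [Real.pi_pos]
  have hnonsep : ¬ TopologicalSpace.IsSeparable (F '' Set.Ico (-π) π) :=
    not_isSeparable_image_of_le_dist huncount (by positivity)
      fun t ht s hs hts => dist_eq_norm (F t) (F s) ▸ hgap t ht s hs hts
  exact ⟨fun t s ht hs hts =>
      ⟨norm_sub_eq_iSup_of_represents_fAMat (hF t) (hF s), hgap t ht s hs hts⟩,
    hnonsep, fun hmeas => hnonsep (hmeas.isSeparable_range.mono (Set.image_subset_range _ _))⟩
end
end

section
/- The operator Wiener class 𝒜(ℓ²(H)) = {A : Σ_{l∈ℤ} sup_k ‖T_{k,k+l}‖ < ∞} is dense in 𝒞(ℓ²(H)) with respect to the B(ℓ²(H)) norm; indeed, for A ∈ 𝒞(ℓ²(H)) the Poisson means P_r(A) = (r^{|j−k|} T_{kj}) belong to 𝒜(ℓ²(H)) and converge to A in operator norm as r → 1⁻. -/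
noncomputable section

variable {H : Type} [NormedAddCommGroup H] [InnerProductSpace ℂ H] [CompleteSpace H]
  [TopologicalSpace.SeparableSpace H]

/-- The Poisson mean `P_r(A) = (r^{|j−k|} T_{kj})` of a matrix. -/
def poissonMat (T : ℕ → ℕ → (H →L[ℂ] H)) (r : ℝ) : ℕ → ℕ → (H →L[ℂ] H) :=
  fun k j => (r ^ ((j : ℤ) - (k : ℤ)).natAbs) • T k j

/-!
The Poisson kernel is positive definite: `r ^ |j - k| = ∑ m : ℤ, u k m * u j m` with
`u k m = √(1 - r²) r ^ (k - m)` for `m ≤ k` (a geometric series). Hence, for the diagonal operators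
`V m = diag (u · m)`, `⟪P_r(B) x, y⟫ = ∑ m, ⟪B (V m x), V m y⟫` and `∑ m, ‖V m x‖² = ‖x‖²`, so
`‖P_r(B)‖ ≤ ‖B‖` for every bounded `B`. The `l`-th diagonal of `P_r(A)` is bounded by
`r ^ |l| ‖A‖`, so `P_r(A)` is in the Wiener class, the norm-convergent sum of its diagonals. For a
banded `B`, `P_r(B) - B` has finitely many diagonals, each of size `O(1 - r)`; approximating
`A ∈ 𝒞` by such a `B` gives `‖P_r(A) - A‖ ≤ 2 ‖A - B‖ + ‖P_r(B) - B‖`.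
-/

open Filter Topology Set

section DiagonalOperator

variable {E : Type} [NormedAddCommGroup E] [InnerProductSpace ℂ E]

lemma norm_sum_single_sq (s : Finset ℕ) (a : ℕ → E) :
    ‖(∑ j ∈ s, lp.single 2 j (a j) : ellTwo E)‖ ^ 2 = ∑ j ∈ s, ‖a j‖ ^ 2 := by
  simpa using lp.norm_sum_single (p := 2) (by norm_num) a s

lemma sum_norm_sq_le_norm_sq (x : ellTwo E) (s : Finset ℕ) :
    ∑ i ∈ s, ‖x i‖ ^ 2 ≤ ‖x‖ ^ 2 := by
  simpa using lp.sum_rpow_le_norm_rpow (p := 2) (by norm_num) x s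

def diagonalFun (S : ℕ → ℕ → (E →L[ℂ] E)) (l : ℤ) (x : ℕ → E) (k : ℕ) : E :=
  if 0 ≤ (k : ℤ) + l then S k ((k : ℤ) + l).toNat (x ((k : ℤ) + l).toNat) else 0

variable {S : ℕ → ℕ → (E →L[ℂ] E)} {l : ℤ} {c : ℝ}

lemma nonneg_of_norm_diagonal_le (hS : ∀ k j : ℕ, (j : ℤ) = k + l → ‖S k j‖ ≤ c) : 0 ≤ c :=
  (norm_nonneg _).trans (hS (-l).toNat l.toNat (by omega))

lemma sum_norm_sq_diagonalFun_le (hS : ∀ k j : ℕ, (j : ℤ) = k + l → ‖S k j‖ ≤ c)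
    (x : ellTwo E) (s : Finset ℕ) :
    ∑ k ∈ s, ‖diagonalFun S l x k‖ ^ 2 ≤ (c * ‖x‖) ^ 2 := by
  set t := s.filter fun k : ℕ => 0 ≤ (k : ℤ) + l
  have hinj : Set.InjOn (fun k : ℕ => ((k : ℤ) + l).toNat) t := by
    intro k hk k' hk' h
    rw [Finset.mem_coe, Finset.mem_filter] at hk hk'
    simp only at h
    omega
  calc ∑ k ∈ s, ‖diagonalFun S l x k‖ ^ 2
      ≤ ∑ k ∈ t, c ^ 2 * ‖x ((k : ℤ) + l).toNat‖ ^ 2 := by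
        rw [Finset.sum_filter]
        refine Finset.sum_le_sum fun k _ => ?_
        unfold diagonalFun
        split_ifs with hk
        · rw [← mul_pow]
          refine pow_le_pow_left₀ (norm_nonneg _) ?_ 2
          exact (S k _).le_of_opNorm_le (hS k _ (by omega)) _
        · simp
    _ = c ^ 2 * ∑ i ∈ t.image fun k : ℕ => ((k : ℤ) + l).toNat, ‖x i‖ ^ 2 := by
        rw [Finset.sum_image hinj, Finset.mul_sum]
    _ ≤ (c * ‖x‖) ^ 2 := by
        rw [mul_pow]
        exact mul_le_mul_of_nonneg_left (sum_norm_sq_le_norm_sq x _) (sq_nonneg c)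

def diagonalOp (S : ℕ → ℕ → (E →L[ℂ] E)) (l : ℤ) {c : ℝ}
    (hS : ∀ k j : ℕ, (j : ℤ) = k + l → ‖S k j‖ ≤ c) : ellTwo E →L[ℂ] ellTwo E :=
  LinearMap.mkContinuous
    { toFun := fun x => ⟨diagonalFun S l x,
        memℓp_gen' (C := (c * ‖x‖) ^ 2) fun s => by
          simpa using sum_norm_sq_diagonalFun_le hS x s⟩
      map_add' := fun x y => by
        ext k
        simp only [diagonalFun, lp.coeFn_add, Pi.add_apply]
        split_ifs <;> simp
      map_smul' := fun a x => by
        ext k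
        simp only [diagonalFun, lp.coeFn_smul, Pi.smul_apply, RingHom.id_apply]
        split_ifs <;> simp }
    c fun x => lp.norm_le_of_forall_sum_le (p := 2) (by norm_num)
      (mul_nonneg (nonneg_of_norm_diagonal_le hS) (norm_nonneg x))
      fun s => by simpa using sum_norm_sq_diagonalFun_le hS x s

variable (hS : ∀ k j : ℕ, (j : ℤ) = k + l → ‖S k j‖ ≤ c)

lemma norm_diagonalOp_le : ‖diagonalOp S l hS‖ ≤ c :=
  LinearMap.mkContinuous_norm_le _ (nonneg_of_norm_diagonal_le hS) _

lemma represents_diagonalOp :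
    Represents (fun k j => if (j : ℤ) = k + l then S k j else 0) (diagonalOp S l hS) := by
  intro j a k
  change diagonalFun S l (lp.single 2 j a) k = _
  by_cases h : (j : ℤ) = k + l
  · have hj : ((k : ℤ) + l).toNat = j := by omega
    simp [diagonalFun, h, hj, show (0 : ℤ) ≤ k + l by omega]
  · simp only [diagonalFun, lp.single_apply, Pi.single_apply, h, if_false]
    split_ifs <;> first | omega | simp

end DiagonalOperator

section Represents

variable {E : Type} [NormedAddCommGroup E] [InnerProductSpace ℂ E]
  {S S' : ℕ → ℕ → (E →L[ℂ] E)} {B B' : ellTwo E →L[ℂ] ellTwo E}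

lemma Represents.norm_apply_le (hB : Represents S B) (k j : ℕ) : ‖S k j‖ ≤ ‖B‖ := by
  refine ContinuousLinearMap.opNorm_le_bound _ (norm_nonneg B) fun a => ?_
  calc ‖S k j a‖ = ‖B (lp.single 2 j a) k‖ := by rw [hB]
    _ ≤ ‖B (lp.single 2 j a)‖ := lp.norm_apply_le_norm (by norm_num) _ k
    _ ≤ ‖B‖ * ‖(lp.single 2 j a : ellTwo E)‖ := B.le_opNorm _
    _ = ‖B‖ * ‖a‖ := by rw [lp.norm_single (by norm_num)]

lemma Represents.unique (hB : Represents S B) (hB' : Represents S B') : B = B' := by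
  refine lp.ext_continuousLinearMap (p := 2) (by norm_num) fun j => ?_
  ext a : 1
  exact lp.ext (funext fun k => (hB j a k).trans (hB' j a k).symm)

lemma Represents.sub (hB : Represents S B) (hB' : Represents S' B') :
    Represents (fun k j => S k j - S' k j) (B - B') := by
  intro j a k
  simp [hB j a k, hB' j a k]

lemma poissonMat_sub (r : ℝ) :
    poissonMat (fun k j => S k j - S' k j) r =
      fun k j => poissonMat S r k j - poissonMat S' r k j := by
  ext k j : 2
  exact smul_sub _ _ _

end Represents

section WienerClass

variable {E : Type} [NormedAddCommGroup E] [InnerProductSpace ℂ E]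
  {S : ℕ → ℕ → (E →L[ℂ] E)} {w : ℤ → ℝ}

lemma wienerMat_of_norm_le (hw : Summable w) (hS : ∀ k j : ℕ, ‖S k j‖ ≤ w (j - k)) :
    WienerMat S := by
  set D : ℤ → Set ℝ := fun l => {ρ | ∃ k j : ℕ, (j : ℤ) = k + l ∧ ρ = ‖S k j‖}
  have hle : ∀ l, ∀ ρ ∈ D l, ρ ≤ w l := by
    rintro l ρ ⟨k, j, hkj, rfl⟩
    simpa [hkj] using hS k j
  have hmem : ∀ l, ‖S (-l).toNat l.toNat‖ ∈ D l := fun l => ⟨_, _, by omega, rfl⟩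
  have hbdd : ∀ l, BddAbove (D l) := fun l => ⟨w l, hle l⟩
  refine ⟨hbdd, hw.of_nonneg_of_le (fun l => ?_) fun l => csSup_le ⟨_, hmem l⟩ (hle l)⟩
  exact le_csSup_of_le (hbdd l) (hmem l) (norm_nonneg _)

variable [CompleteSpace E]

lemma exists_represents_of_summable (hw : Summable w) (hS : ∀ k j : ℕ, ‖S k j‖ ≤ w (j - k)) :
    ∃ B, Represents S B ∧ ‖B‖ ≤ ∑' l, w l := by
  have hSl : ∀ l (k j : ℕ), (j : ℤ) = k + l → ‖S k j‖ ≤ w l := fun l k j h => by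
    simpa [h] using hS k j
  set D : ℤ → ellTwo E →L[ℂ] ellTwo E := fun l => diagonalOp S l (hSl l)
  have hD : Summable D := hw.of_norm_bounded fun l => norm_diagonalOp_le _
  refine ⟨∑' l, D l, fun j a k => ?_, tsum_of_norm_bounded hw.hasSum fun l => norm_diagonalOp_le _⟩
  have hsum := hD.hasSum.mapL
    ((lp.evalCLM ℂ (fun _ : ℕ => E) 2 k).comp (ContinuousLinearMap.apply ℂ _ (lp.single 2 j a)))
  refine hsum.unique ?_
  convert hasSum_ite_eq ((j : ℤ) - k) (S k j a) using 1
  ext l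
  change D l (lp.single 2 j a) k = _
  rw [represents_diagonalOp (hSl l) j a k]
  by_cases h : (j : ℤ) = k + l
  · simp [h]
  · simp [h, show l ≠ (j : ℤ) - k by omega]

end WienerClass

section SchurMultiplier

open scoped InnerProductSpace

variable {E : Type} [NormedAddCommGroup E] [InnerProductSpace ℂ E]

lemma norm_ofReal_smul_one_le {x : ℝ} (hx : |x| ≤ 1) : ‖(x : ℂ) • (1 : E →L[ℂ] E)‖ ≤ 1 :=
  calc ‖(x : ℂ) • (1 : E →L[ℂ] E)‖ ≤ ‖(x : ℂ)‖ * ‖(1 : E →L[ℂ] E)‖ :=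
        ContinuousLinearMap.opNorm_smul_le _ _
    _ ≤ 1 := mul_le_one₀ (by rwa [Complex.norm_real, Real.norm_eq_abs]) (norm_nonneg _)
      ContinuousLinearMap.norm_id_le

def scalarDiagonalOp (v : ℕ → ℝ) (hv : ∀ k, |v k| ≤ 1) : ellTwo E →L[ℂ] ellTwo E :=
  diagonalOp (fun k _ => (v k : ℂ) • (1 : E →L[ℂ] E)) 0 fun k _ _ => norm_ofReal_smul_one_le (hv k)

lemma scalarDiagonalOp_single (v : ℕ → ℝ) (hv : ∀ k, |v k| ≤ 1) (j : ℕ) (a : E) :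
    scalarDiagonalOp v hv (lp.single 2 j a) = (v j : ℂ) • lp.single 2 j a := by
  refine lp.ext (funext fun k => ?_)
  rw [scalarDiagonalOp, represents_diagonalOp, lp.coeFn_smul, Pi.smul_apply]
  by_cases h : j = k
  · subst h; simp
  · simp [h, Ne.symm h]

variable {ι : Type*} {u : ℕ → ι → ℝ} {φ : ℕ → ℕ → ℝ}
  {S : ℕ → ℕ → (E →L[ℂ] E)} {B C : ellTwo E →L[ℂ] ellTwo E} {V : ι → ellTwo E →L[ℂ] ellTwo E}

lemma hasSum_inner_schur_sum_single (hu : ∀ k j, HasSum (fun i => u k i * u j i) (φ k j))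
    (hV : ∀ i j a, V i (lp.single 2 j a) = (u j i : ℂ) • lp.single 2 j a)
    (hB : Represents S B) (hC : Represents (fun k j => φ k j • S k j) C)
    (s t : Finset ℕ) (a b : ℕ → E) :
    HasSum (fun i => ⟪B (V i (∑ j ∈ s, lp.single 2 j (a j))), V i (∑ k ∈ t, lp.single 2 k (b k))⟫_ℂ)
      ⟪C (∑ j ∈ s, lp.single 2 j (a j)), ∑ k ∈ t, lp.single 2 k (b k)⟫_ℂ := by
  simp only [map_sum, sum_inner, inner_sum]
  refine hasSum_sum fun k _ => hasSum_sum fun j _ => ?_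
  have hB' : ⟪B (lp.single 2 j (a j)), lp.single 2 k (b k)⟫_ℂ = ⟪S k j (a j), b k⟫_ℂ := by
    rw [lp.inner_single_right, hB]
  have hC' : ⟪C (lp.single 2 j (a j)), lp.single 2 k (b k)⟫_ℂ =
      φ k j * ⟪S k j (a j), b k⟫_ℂ := by
    rw [lp.inner_single_right, hC, smul_apply, ← Complex.coe_smul, inner_smul_left,
      Complex.conj_ofReal]
  simp only [hV, map_smul, inner_smul_left, inner_smul_right, hB', hC', Complex.conj_ofReal]
  simpa [mul_assoc] using (Complex.hasSum_ofReal.mpr (hu k j)).mul_right ⟪S k j (a j), b k⟫_ℂ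

lemma hasSum_norm_sq_sum_single (hu : ∀ k j, HasSum (fun i => u k i * u j i) (φ k j))
    (hV : ∀ i j a, V i (lp.single 2 j a) = (u j i : ℂ) • lp.single 2 j a)
    (s : Finset ℕ) (a : ℕ → E) :
    HasSum (fun i => ‖V i (∑ j ∈ s, lp.single 2 j (a j))‖ ^ 2) (∑ j ∈ s, φ j j * ‖a j‖ ^ 2) := by
  have hnorm : ∀ i, ‖V i (∑ j ∈ s, lp.single 2 j (a j))‖ ^ 2 =
      ∑ j ∈ s, u j i * u j i * ‖a j‖ ^ 2 := fun i => by
    simp only [map_sum, hV, ← lp.single_smul]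
    rw [norm_sum_single_sq]
    refine Finset.sum_congr rfl fun j _ => ?_
    rw [norm_smul, Complex.norm_real, Real.norm_eq_abs, mul_pow, sq_abs, sq]
  simp only [hnorm]
  exact hasSum_sum fun j _ => (hu j j).mul_right _

lemma norm_inner_schur_sum_single_le (hu : ∀ k j, HasSum (fun i => u k i * u j i) (φ k j))
    (hφ : ∀ k, φ k k ≤ 1) (hV : ∀ i j a, V i (lp.single 2 j a) = (u j i : ℂ) • lp.single 2 j a)
    (hB : Represents S B) (hC : Represents (fun k j => φ k j • S k j) C)
    (s t : Finset ℕ) (a b : ℕ → E) :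
    ‖⟪C (∑ j ∈ s, lp.single 2 j (a j)), ∑ k ∈ t, lp.single 2 k (b k)⟫_ℂ‖ ≤
      ‖B‖ * ((‖(∑ j ∈ s, lp.single 2 j (a j) : ellTwo E)‖ ^ 2 +
        ‖(∑ k ∈ t, lp.single 2 k (b k) : ellTwo E)‖ ^ 2) / 2) := by
  have hφle : ∀ (s : Finset ℕ) (a : ℕ → E),
      ∑ j ∈ s, φ j j * ‖a j‖ ^ 2 ≤ ‖(∑ j ∈ s, lp.single 2 j (a j) : ellTwo E)‖ ^ 2 :=
    fun s a => by
      rw [norm_sum_single_sq]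
      exact Finset.sum_le_sum fun j _ => mul_le_of_le_one_left (sq_nonneg _) (hφ j)
  rw [← (hasSum_inner_schur_sum_single hu hV hB hC s t a b).tsum_eq]
  refine (tsum_of_norm_bounded (((hasSum_norm_sq_sum_single hu hV s a).add
    (hasSum_norm_sq_sum_single hu hV t b)).div_const 2 |>.mul_left ‖B‖) fun i => ?_).trans ?_
  · set x := V i (∑ j ∈ s, lp.single 2 j (a j))
    set y := V i (∑ k ∈ t, lp.single 2 k (b k))
    calc ‖⟪B x, y⟫_ℂ‖ ≤ ‖B x‖ * ‖y‖ := norm_inner_le_norm _ _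
      _ ≤ ‖B‖ * ‖x‖ * ‖y‖ := by gcongr; exact B.le_opNorm x
      _ ≤ ‖B‖ * ((‖x‖ ^ 2 + ‖y‖ ^ 2) / 2) := by
        nlinarith [mul_nonneg (norm_nonneg B) (sq_nonneg (‖x‖ - ‖y‖))]
  · gcongr
    exacts [hφle s a, hφle t b]

-- AM-GM in place of Cauchy-Schwarz: only unit vectors matter for the operator norm.
lemma norm_inner_schur_le (hu : ∀ k j, HasSum (fun i => u k i * u j i) (φ k j))
    (hφ : ∀ k, φ k k ≤ 1) (hV : ∀ i j a, V i (lp.single 2 j a) = (u j i : ℂ) • lp.single 2 j a)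
    (hB : Represents S B) (hC : Represents (fun k j => φ k j • S k j) C) (x y : ellTwo E) :
    ‖⟪C x, y⟫_ℂ‖ ≤ ‖B‖ * ((‖x‖ ^ 2 + ‖y‖ ^ 2) / 2) := by
  have hx := (lp.hasSum_single (by norm_num) x).tendsto_sum_nat
  have hy := (lp.hasSum_single (by norm_num) y).tendsto_sum_nat
  exact le_of_tendsto_of_tendsto' (((C.continuous.tendsto x).comp hx).inner hy).norm
    ((((hx.norm.pow 2).add (hy.norm.pow 2)).div_const 2).const_mul ‖B‖)
    fun n => norm_inner_schur_sum_single_le hu hφ hV hB hC _ _ x y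

theorem Represents.norm_le_of_schur (hu : ∀ k j, HasSum (fun i => u k i * u j i) (φ k j))
    (hφ : ∀ k, φ k k ≤ 1) (hB : Represents S B) (hC : Represents (fun k j => φ k j • S k j) C) :
    ‖C‖ ≤ ‖B‖ := by
  have hu1 : ∀ i k, |u k i| ≤ 1 := fun i k => abs_le_one_iff_mul_self_le_one.2
    ((le_hasSum (hu k k) i fun _ _ => mul_self_nonneg _).trans (hφ k))
  have hV := fun i => scalarDiagonalOp_single (E := E) (u · i) (hu1 i)
  refine ContinuousLinearMap.opNorm_le_of_re_inner_le (norm_nonneg B) fun x y hx hy => ?_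
  refine (RCLike.re_le_norm _).trans ((norm_inner_schur_le hu hφ hV hB hC x y).trans ?_)
  rw [hx, hy]
  norm_num

end SchurMultiplier

section Poisson

variable {E : Type} [NormedAddCommGroup E] [InnerProductSpace ℂ E] {r c : ℝ}

def poissonFactor (r : ℝ) (k : ℕ) (m : ℤ) : ℝ :=
  if m ≤ k then √(1 - r ^ 2) * r ^ ((k : ℤ) - m).toNat else 0

lemma hasSum_poissonFactor_mul_of_le (hr : r ∈ Ico 0 1) {k j : ℕ} (hkj : k ≤ j) :
    HasSum (fun m => poissonFactor r k m * poissonFactor r j m) (r ^ (j - k)) := by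
  have hr2 : r ^ 2 < 1 := pow_lt_one₀ hr.1 hr.2 two_ne_zero
  have hterm : ∀ n : ℕ, poissonFactor r k (k - n) * poissonFactor r j (k - n) =
      (1 - r ^ 2) * r ^ (j - k) * (r ^ 2) ^ n := fun n => by
    have e1 : ((k : ℤ) - (k - n)).toNat = n := by omega
    have e2 : ((j : ℤ) - (k - n)).toNat = j - k + n := by omega
    have hsq : √(1 - r ^ 2) * √(1 - r ^ 2) = 1 - r ^ 2 := Real.mul_self_sqrt (by linarith)
    simp only [poissonFactor, if_pos (show (k : ℤ) - n ≤ k by omega),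
      if_pos (show (k : ℤ) - n ≤ j by omega), e1, e2]
    linear_combination r ^ (j - k) * r ^ n * r ^ n * hsq
  have hgeom : HasSum (fun n : ℕ => (1 - r ^ 2) * r ^ (j - k) * (r ^ 2) ^ n) (r ^ (j - k)) := by
    have h := (hasSum_geometric_of_lt_one (sq_nonneg r) hr2).mul_left ((1 - r ^ 2) * r ^ (j - k))
    rwa [mul_right_comm, mul_inv_cancel₀ (sub_pos.2 hr2).ne', one_mul] at h
  refine (Function.Injective.hasSum_iff (g := fun n : ℕ => (k : ℤ) - n)
    (fun a b h => by simp only at h; omega) fun m hm => ?_).1 (by simpa [Function.comp_def, hterm])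
  have : ¬ m ≤ k := fun h => hm ⟨((k : ℤ) - m).toNat, by simp only; omega⟩
  simp [poissonFactor, this]

lemma hasSum_poissonFactor_mul (hr : r ∈ Ico 0 1) (k j : ℕ) :
    HasSum (fun m => poissonFactor r k m * poissonFactor r j m) (r ^ ((j : ℤ) - k).natAbs) := by
  rcases le_total k j with h | h
  · rw [show ((j : ℤ) - k).natAbs = j - k by omega]
    exact hasSum_poissonFactor_mul_of_le hr h
  · rw [show ((j : ℤ) - k).natAbs = k - j by omega]
    simpa only [mul_comm] using hasSum_poissonFactor_mul_of_le hr h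

theorem Represents.norm_le_of_poissonMat {S : ℕ → ℕ → (E →L[ℂ] E)} {B C : ellTwo E →L[ℂ] ellTwo E}
    (hr : r ∈ Ico 0 1) (hB : Represents S B) (hC : Represents (poissonMat S r) C) : ‖C‖ ≤ ‖B‖ :=
  hB.norm_le_of_schur (hasSum_poissonFactor_mul hr) (fun k => by simp) hC

lemma norm_poissonMat_le {T : ℕ → ℕ → (E →L[ℂ] E)} (hT : ∀ k j, ‖T k j‖ ≤ c) (hr : 0 ≤ r)
    (k j : ℕ) : ‖poissonMat T r k j‖ ≤ r ^ ((j : ℤ) - k).natAbs * c := by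
  rw [poissonMat, norm_smul, norm_pow, Real.norm_of_nonneg hr]
  exact mul_le_mul_of_nonneg_left (hT k j) (by positivity)

lemma norm_poissonMat_sub_le {S : ℕ → ℕ → (E →L[ℂ] E)} (hS : ∀ k j, ‖S k j‖ ≤ c)
    (hr : r ∈ Ico 0 1) (k j : ℕ) :
    ‖poissonMat S r k j - S k j‖ ≤ (1 - r ^ ((j : ℤ) - k).natAbs) * c := by
  have hpow : r ^ ((j : ℤ) - k).natAbs ≤ 1 := pow_le_one₀ hr.1 hr.2.le
  have h : poissonMat S r k j - S k j = -((1 - r ^ ((j : ℤ) - k).natAbs) • S k j) := by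
    rw [poissonMat, sub_smul, one_smul]
    abel
  rw [h, norm_neg, norm_smul, Real.norm_of_nonneg (by linarith)]
  exact mul_le_mul_of_nonneg_left (hS k j) (by linarith)

lemma summable_pow_natAbs (hr : r ∈ Ico 0 1) : Summable fun l : ℤ => r ^ l.natAbs :=
  Summable.of_nat_of_neg (by simpa using summable_geometric_of_lt_one hr.1 hr.2)
    (by simpa using summable_geometric_of_lt_one hr.1 hr.2)

lemma wienerMat_poissonMat {T : ℕ → ℕ → (E →L[ℂ] E)} (hT : ∀ k j, ‖T k j‖ ≤ c)
    (hr : r ∈ Ico 0 1) : WienerMat (poissonMat T r) :=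
  wienerMat_of_norm_le ((summable_pow_natAbs hr).mul_right c) (norm_poissonMat_le hT hr.1)

lemma exists_represents_poissonMat [CompleteSpace E] {T : ℕ → ℕ → (E →L[ℂ] E)}
    (hT : ∀ k j, ‖T k j‖ ≤ c) (hr : r ∈ Ico 0 1) : ∃ P, Represents (poissonMat T r) P :=
  (exists_represents_of_summable ((summable_pow_natAbs hr).mul_right c)
    (norm_poissonMat_le hT hr.1)).imp fun _ => And.left

end Poisson

section Approximation

variable {E : Type} [NormedAddCommGroup E] [InnerProductSpace ℂ E] [CompleteSpace E]

lemma tendsto_norm_poissonMat_sub_of_polyMat {S : ℕ → ℕ → (E →L[ℂ] E)}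
    {B : ellTwo E →L[ℂ] ellTwo E} {Q : ℝ → ellTwo E →L[ℂ] ellTwo E} (hS : PolyMat S)
    (hB : Represents S B) (hQ : ∀ r ∈ Ico (0 : ℝ) 1, Represents (poissonMat S r) (Q r)) :
    Tendsto (fun r => ‖Q r - B‖) (𝓝[Ico 0 1] 1) (𝓝 0) := by
  obtain ⟨⟨N, hN⟩, M, hM⟩ := hS
  set band := Finset.Icc (-N : ℤ) N
  set g : ℝ → ℝ := fun r => ∑ l ∈ band, (1 - r ^ l.natAbs) * M
  have hg : Tendsto g (𝓝[Ico 0 1] 1) (𝓝 0) := by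
    have : Continuous g := by fun_prop
    simpa [g] using (this.tendsto 1).mono_left nhdsWithin_le_nhds
  refine squeeze_zero' (Eventually.of_forall fun r => norm_nonneg _) ?_ hg
  filter_upwards [self_mem_nhdsWithin] with r hr
  set w : ℤ → ℝ := fun l => if l ∈ band then (1 - r ^ l.natAbs) * M else 0
  have hentry : ∀ k j : ℕ, ‖poissonMat S r k j - S k j‖ ≤ w (j - k) := fun k j => by
    by_cases hl : (j : ℤ) - k ∈ band
    · simpa [w, hl] using norm_poissonMat_sub_le hM hr k j
    · have h0 : S k j = 0 := hN k j (by rw [lt_abs]; simp [band] at hl; omega)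
      simp [w, hl, poissonMat, h0]
  obtain ⟨D, hD, hDle⟩ := exists_represents_of_summable
    (summable_of_ne_finset_zero (f := w) (s := band) fun l hl => if_neg hl) hentry
  rw [((hQ r hr).sub hB).unique hD]
  refine hDle.trans_eq ((tsum_eq_sum (f := w) fun l hl => if_neg hl).trans ?_)
  exact Finset.sum_congr rfl fun l hl => if_pos hl

theorem tendsto_poisson_of_continuousClass {T : ℕ → ℕ → (E →L[ℂ] E)}
    {A : ellTwo E →L[ℂ] ellTwo E} {P : ℝ → ellTwo E →L[ℂ] ellTwo E} (hA : Represents T A)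
    (hC : ContinuousClass A) (hP : ∀ r ∈ Ico (0 : ℝ) 1, Represents (poissonMat T r) (P r)) :
    Tendsto P (𝓝[Ico 0 1] 1) (𝓝 A) := by
  rw [Metric.tendsto_nhds]
  intro ε hε
  obtain ⟨B, ⟨S, hS, hB⟩, hAB⟩ := Metric.mem_closure_iff.1 hC (ε / 3) (by positivity)
  obtain ⟨M, hM⟩ := hS.2
  choose! Q hQ using fun r (hr : r ∈ Ico (0 : ℝ) 1) => exists_represents_poissonMat hM hr
  filter_upwards [(tendsto_norm_poissonMat_sub_of_polyMat hS hB hQ).eventually_lt_const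
    (by positivity : (0 : ℝ) < ε / 3), self_mem_nhdsWithin] with r hQB hr
  have hPQ : ‖P r - Q r‖ ≤ ‖A - B‖ := (hA.sub hB).norm_le_of_poissonMat hr <| by
    rw [poissonMat_sub]
    exact (hP r hr).sub (hQ r hr)
  rw [dist_eq_norm] at hAB ⊢
  calc ‖P r - A‖ = ‖(P r - Q r) + (Q r - B) + (B - A)‖ := by abel_nf
    _ ≤ ‖P r - Q r‖ + ‖Q r - B‖ + ‖B - A‖ := norm_add₃_le
    _ < ε := by rw [norm_sub_rev B A]; linarith

end Approximation

/-- the Wiener class `𝒜(ℓ²(H))` is dense in `𝒞(ℓ²(H))`; indeed, for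
`A ∈ 𝒞(ℓ²(H))` the Poisson means `P_r(A)` lie in `𝒜(ℓ²(H))` and converge to `A` in
operator norm as `r → 1⁻`. -/
theorem wiener_dense_in_continuousClass (T : ℕ → ℕ → (H →L[ℂ] H))
    (A : ellTwo H →L[ℂ] ellTwo H) (hA : Represents T A) (hC : ContinuousClass A) :
    A ∈ closure {B : ellTwo H →L[ℂ] ellTwo H |
        ∃ S : ℕ → ℕ → (H →L[ℂ] H), WienerMat S ∧ Represents S B} ∧
    (∀ r : ℝ, r ∈ Set.Ico (0 : ℝ) 1 → WienerMat (poissonMat T r)) ∧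
    ∃ P : ℝ → (ellTwo H →L[ℂ] ellTwo H),
      (∀ r ∈ Set.Ico (0 : ℝ) 1, Represents (poissonMat T r) (P r)) ∧
      Filter.Tendsto P (nhdsWithin 1 (Set.Ico (0 : ℝ) 1)) (nhds A) := by
  have hW : ∀ r ∈ Ico (0 : ℝ) 1, WienerMat (poissonMat T r) := fun r hr =>
    wienerMat_poissonMat hA.norm_apply_le hr
  choose! P hP using fun r (hr : r ∈ Ico (0 : ℝ) 1) =>
    exists_represents_poissonMat hA.norm_apply_le hr
  have hlim := tendsto_poisson_of_continuousClass hA hC hP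
  have : (𝓝[Ico (0 : ℝ) 1] 1).NeBot := right_nhdsWithin_Ico_neBot zero_lt_one
  refine ⟨mem_closure_of_tendsto hlim ?_, hW, P, hP, hlim⟩
  filter_upwards [self_mem_nhdsWithin] with r hr using ⟨_, hW r hr, hP r hr⟩
end
end
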